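/- arXiv:1406.6413 — 5 statements merged into one kernel-verified Lean document; each statement's English description precedes it below -/
import Mathlib

section
/- For subsets I, J of [k], there exists a homomorphism from the oriented path Q_I to the oriented path Q_J if and only if I ⊆ J. Moreover, when it exists, this homomorphism is unique and surjective. -/
/-!
Give every vertex of an oriented path its height (forward edges count `+1`, backward
edges `-1`). A homomorphism shifts heights by a constant. `Q_I` climbs from height `0` to
`k + 2`, while the heights of `Q_J` lie in `[0, k + 2]` with `0` attained only at the initial
vertex, so a homomorphism `Q_I → Q_J` preserves heights and fixes the initial vertex.
Walking along `Q_I` block by block, the start of the `l`-th block of `Q_I` must go to the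
start of the `l`-th block of `Q_J`: the peak of a zigzag of `Q_J` is a dead end for a forward
edge, which rules out `l ∈ I \ J` and pins down the images of the zigzag vertices. This gives
`I ⊆ J`, uniqueness and surjectivity. Conversely, folding a zigzag `•→•←•→•` onto an edge
`•→•` is a homomorphism, and folding the zigzags indexed by `J \ I` one at a time maps `Q_I`
to `Q_J`.
-/

/-- Direction pattern of the oriented path `Q_I`: a single edge, then for each
`l ∈ [k]` a single edge (if `l ∈ I`) or a zigzag (otherwise), then a single edge. -/
def qdirs {k : ℕ} (I : Finset (Fin k)) : List Bool :=
  [true] ++ ((List.finRange k).flatMap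
    (fun l => if l ∈ I then [true] else [true, false, true])) ++ [true]

/-- Edge relation of the oriented path with direction pattern `ds`
(vertices are `0, 1, ..., ds.length`). -/
def pedge (ds : List Bool) (x y : ℕ) : Prop :=
  (y = x + 1 ∧ x < ds.length ∧ ds.getD x false = true) ∨
  (x = y + 1 ∧ y < ds.length ∧ ds.getD y false = false)

/-- A homomorphism between the oriented paths with direction patterns `ds` and `ds'`:
a map on vertices preserving directed edges (not required to preserve endpoints). -/
def pathHom (ds ds' : List Bool) (φ : ℕ → ℕ) : Prop :=
  ∀ x < ds.length,
    (ds.getD x false = true → pedge ds' (φ x) (φ (x + 1))) ∧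
    (ds.getD x false = false → pedge ds' (φ (x + 1)) (φ x))

def pathHeight (ds : List Bool) (x : ℕ) : ℤ :=
  ∑ i ∈ Finset.range x, if ds.getD i false then 1 else -1

lemma pathHeight_zero (ds : List Bool) : pathHeight ds 0 = 0 := rfl

lemma pathHeight_succ (ds : List Bool) (x : ℕ) :
    pathHeight ds (x + 1) = pathHeight ds x + if ds.getD x false then 1 else -1 :=
  Finset.sum_range_succ _ x

lemma pathHeight_succ_of_true {ds : List Bool} {x : ℕ} (h : ds.getD x false = true) :
    pathHeight ds (x + 1) = pathHeight ds x + 1 := by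
  rw [pathHeight_succ, h, if_pos rfl]

lemma pathHeight_succ_of_false {ds : List Bool} {x : ℕ} (h : ds.getD x false = false) :
    pathHeight ds (x + 1) = pathHeight ds x - 1 := by
  rw [pathHeight_succ, h, if_neg Bool.false_ne_true, sub_eq_add_neg]

section PathHom

variable {ds ds' ds'' : List Bool} {φ ψ : ℕ → ℕ}

lemma pedge.adj_height {u v : ℕ} (h : pedge ds u v) :
    (v = u + 1 ∨ u = v + 1) ∧ u ≤ ds.length ∧ v ≤ ds.length ∧
      pathHeight ds v = pathHeight ds u + 1 := by
  rcases h with ⟨rfl, hu, hd⟩ | ⟨rfl, hv, hd⟩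
  · exact ⟨by omega, by omega, by omega, pathHeight_succ_of_true hd⟩
  · refine ⟨by omega, by omega, by omega, ?_⟩
    rw [pathHeight_succ_of_false hd]; ring

lemma pathHom_id (ds : List Bool) : pathHom ds ds id := fun _ hx =>
  ⟨fun h => Or.inl ⟨rfl, hx, h⟩, fun h => Or.inr ⟨rfl, hx, h⟩⟩

lemma pathHom.map_pedge (hφ : pathHom ds ds' φ) {u v : ℕ} (h : pedge ds u v) :
    pedge ds' (φ u) (φ v) := by
  rcases h with ⟨rfl, hu, hd⟩ | ⟨rfl, hv, hd⟩
  · exact (hφ u hu).1 hd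
  · exact (hφ v hv).2 hd

lemma pathHom.comp (hψ : pathHom ds' ds'' ψ) (hφ : pathHom ds ds' φ) :
    pathHom ds ds'' (ψ ∘ φ) := fun x hx =>
  ⟨fun h => hψ.map_pedge ((hφ x hx).1 h), fun h => hψ.map_pedge ((hφ x hx).2 h)⟩

lemma pathHom.step (hφ : pathHom ds ds' φ) {x : ℕ} (hx : x < ds.length) :
    (φ (x + 1) = φ x + 1 ∨ φ x = φ (x + 1) + 1) ∧ φ x ≤ ds'.length ∧
      φ (x + 1) ≤ ds'.length ∧
      pathHeight ds' (φ (x + 1)) - pathHeight ds' (φ x) =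
        pathHeight ds (x + 1) - pathHeight ds x := by
  cases hd : ds.getD x false
  · have := ((hφ x hx).2 hd).adj_height
    rw [pathHeight_succ_of_false hd]
    exact ⟨this.1.symm, this.2.2.1, this.2.1, by linarith [this.2.2.2]⟩
  · have := ((hφ x hx).1 hd).adj_height
    rw [pathHeight_succ_of_true hd]
    exact ⟨this.1, this.2.1, this.2.2.1, by linarith [this.2.2.2]⟩

lemma pathHom.pathHeight_map (hφ : pathHom ds ds' φ) {x : ℕ} (hx : x ≤ ds.length) :
    pathHeight ds' (φ x) = pathHeight ds' (φ 0) + pathHeight ds x := by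
  induction x with
  | zero => rw [pathHeight_zero, add_zero]
  | succ x ih => linarith [(hφ.step hx).2.2.2, ih (by omega)]

lemma pathHom_fold (A C : List Bool) :
    pathHom (A ++ true :: false :: true :: C) (A ++ true :: C)
      (fun x => if x ≤ A.length + 1 then x else x - 2) := by
  set f := fun x => if x ≤ A.length + 1 then x else x - 2
  intro x hx
  simp only [List.length_append, List.length_cons] at hx
  have transfer : ∀ y < A.length + C.length + 1,
      (A ++ true :: false :: true :: C).getD x false = (A ++ true :: C).getD y false →
      f x = y → f (x + 1) = y + 1 →
      ((A ++ true :: false :: true :: C).getD x false = true →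
        pedge (A ++ true :: C) (f x) (f (x + 1))) ∧
      ((A ++ true :: false :: true :: C).getD x false = false →
        pedge (A ++ true :: C) (f (x + 1)) (f x)) := by
    intro y hy hd h0 h1
    rw [hd, h0, h1]
    exact pathHom_id _ y (by simp; omega)
  rcases lt_or_ge x A.length with h | h
  · refine transfer x (by omega) ?_ (if_pos (by omega)) (if_pos (by omega))
    rw [List.getD_append _ _ _ _ h, List.getD_append _ _ _ _ h]
  obtain ⟨j, rfl⟩ := Nat.exists_eq_add_of_le h
  match j with
  | 0 =>
    refine transfer A.length (by omega) ?_ (if_pos (by omega)) (if_pos (by omega))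
    simp
  | 1 =>
    refine ⟨fun h => by simp at h, fun _ => ?_⟩
    rw [show f (A.length + 1) = A.length + 1 from if_pos le_rfl,
      show f (A.length + 1 + 1) = A.length from (if_neg (by omega)).trans (by omega)]
    exact Or.inl ⟨rfl, by simp, by simp⟩
  | j + 2 =>
    refine transfer (A.length + j) (by omega) ?_ ((if_neg (by omega)).trans (by omega))
      ((if_neg (by omega)).trans (by omega))
    rw [List.getD_append_right _ _ _ _ (by omega), List.getD_append_right _ _ _ _ (by omega)]
    simp

end PathHom

section QPath

variable {k : ℕ} (I : Finset (Fin k))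

def qblock (l : Fin k) : List Bool :=
  if l ∈ I then [true] else [true, false, true]

/-- The block `Q_{I,l}` starts at vertex `qstart I l`; `qstart I k` is where the final edge
starts. -/
def qstart (l : ℕ) : ℕ :=
  (((List.finRange k).take l).flatMap (qblock I)).length + 1

lemma qstart_zero : qstart I 0 = 1 := rfl

def qsuffix (l : ℕ) : List Bool :=
  ((List.finRange k).drop l).flatMap (qblock I) ++ [true]

lemma qdirs_eq_append (l : ℕ) :
    qdirs I = (true :: ((List.finRange k).take l).flatMap (qblock I)) ++ qsuffix I l := by
  rw [qsuffix, ← List.append_assoc, List.cons_append, ← List.flatMap_append,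
    List.take_append_drop]
  rfl

lemma qsuffix_of_lt (l : Fin k) : qsuffix I l = qblock I l ++ qsuffix I (l + 1) := by
  rw [qsuffix, List.drop_eq_getElem_cons (by simp)]
  simp [qsuffix]

lemma qsuffix_last : qsuffix I k = [true] := by
  rw [qsuffix, List.drop_eq_nil_of_le (by simp)]
  rfl

lemma qstart_add_length_qsuffix (l : ℕ) :
    qstart I l + (qsuffix I l).length = (qdirs I).length := by
  rw [qdirs_eq_append I l, List.length_append, List.length_cons, qstart]

lemma length_qdirs : (qdirs I).length = qstart I k + 1 := by
  simpa [qsuffix_last] using (qstart_add_length_qsuffix I k).symm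

lemma qstart_succ (l : Fin k) : qstart I (l + 1) = qstart I l + if l ∈ I then 1 else 3 := by
  have h := qstart_add_length_qsuffix I l
  rw [qsuffix_of_lt, List.length_append, ← qstart_add_length_qsuffix I (l + 1)] at h
  by_cases hl : l ∈ I <;>
    simp only [qblock, hl, ↓reduceIte, List.length_cons, List.length_nil] at h ⊢ <;> omega

lemma getD_qdirs_qstart_add (l j : ℕ) :
    (qdirs I).getD (qstart I l + j) false = (qsuffix I l).getD j false := by
  rw [qdirs_eq_append I l, List.getD_append_right _ _ _ _ (by simp [qstart])]
  simp [qstart]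

lemma getD_qdirs_qstart {l : ℕ} (hl : l ≤ k) : (qdirs I).getD (qstart I l) false = true := by
  rcases hl.lt_or_eq with hl | rfl
  · have := getD_qdirs_qstart_add I l 0
    rw [qsuffix_of_lt I ⟨l, hl⟩] at this
    by_cases h : (⟨l, hl⟩ : Fin k) ∈ I <;> simpa [qblock, h] using this
  · simpa [qsuffix_last] using getD_qdirs_qstart_add I l 0

lemma getD_qdirs_zigzag {l : Fin k} (hl : l ∉ I) :
    (qdirs I).getD (qstart I l + 1) false = false ∧
      (qdirs I).getD (qstart I l + 2) false = true := by
  rw [getD_qdirs_qstart_add, getD_qdirs_qstart_add, qsuffix_of_lt, qblock, if_neg hl]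
  exact ⟨rfl, rfl⟩

lemma getD_qdirs_zero : (qdirs I).getD 0 false = true := rfl

lemma qstart_lt_length (l : ℕ) : qstart I l < (qdirs I).length := by
  have := qstart_add_length_qsuffix I l
  have : 0 < (qsuffix I l).length := by simp [qsuffix]
  omega

lemma qstart_add_three_lt_length {l : Fin k} (hl : l ∉ I) :
    qstart I l + 3 < (qdirs I).length := by
  have hs := qstart_succ I l
  rw [if_neg hl] at hs
  rw [← hs]
  exact qstart_lt_length I _

lemma pathHeight_qstart {l : ℕ} (hl : l ≤ k) : pathHeight (qdirs I) (qstart I l) = l + 1 := by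
  induction l with
  | zero => rw [qstart_zero, pathHeight_succ_of_true (getD_qdirs_zero I)]; rfl
  | succ m ih =>
    have hm : m < k := by omega
    have h0 := getD_qdirs_qstart I hm.le
    rw [qstart_succ I ⟨m, hm⟩]
    by_cases hI : (⟨m, hm⟩ : Fin k) ∈ I
    · rw [if_pos hI, pathHeight_succ_of_true h0, ih hm.le]; push_cast; ring
    · obtain ⟨h1, h2⟩ := getD_qdirs_zigzag I hI
      rw [if_neg hI, pathHeight_succ_of_true h2, pathHeight_succ_of_false h1,
        pathHeight_succ_of_true h0, ih hm.le]
      push_cast; ring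

lemma pathHeight_qstart_add_one {l : ℕ} (hl : l ≤ k) :
    pathHeight (qdirs I) (qstart I l + 1) = l + 2 := by
  rw [pathHeight_succ_of_true (getD_qdirs_qstart I hl), pathHeight_qstart I hl]; ring

lemma pathHeight_qstart_add_two (l : Fin k) :
    pathHeight (qdirs I) (qstart I l + 2) = if l ∈ I then (l : ℕ) + 3 else (l : ℕ) + 1 := by
  by_cases hl : l ∈ I
  · have := qstart_succ I l
    rw [if_pos hl] at this
    rw [if_pos hl, show qstart I l + 2 = qstart I (l + 1) + 1 by omega,
      pathHeight_qstart_add_one I l.isLt]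
    push_cast; ring
  · rw [if_neg hl, pathHeight_succ_of_false (getD_qdirs_zigzag I hl).1,
      pathHeight_qstart_add_one I l.isLt.le]
    push_cast; ring

lemma pathHeight_of_succ_eq_qstart {p l : ℕ} (hl : l ≤ k) (hp : p + 1 = qstart I l) :
    pathHeight (qdirs I) p = l := by
  cases l with
  | zero =>
    obtain rfl : p = 0 := by simpa [qstart_zero] using hp
    rfl
  | succ m =>
    have hm : m < k := by omega
    have hs := qstart_succ I ⟨m, hm⟩
    have h2 := pathHeight_qstart_add_two I ⟨m, hm⟩
    dsimp only at hs h2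
    by_cases hI : (⟨m, hm⟩ : Fin k) ∈ I
    · rw [if_pos hI] at hs
      rw [show p = qstart I m by omega, pathHeight_qstart I hm.le]; push_cast; ring
    · rw [if_neg hI] at hs h2
      rw [show p = qstart I m + 2 by omega, h2]

lemma qdirs_vertex_cases {p : ℕ} (hp : p ≤ (qdirs I).length) :
    p = 0 ∨ (∃ l ≤ k, p = qstart I l ∨ p = qstart I l + 1) ∨
      ∃ l : Fin k, l ∉ I ∧ p = qstart I l + 2 := by
  rcases Nat.eq_zero_or_pos p with rfl | hp0
  · exact Or.inl rfl
  right
  obtain ⟨l, hlk, hle, hgt⟩ : ∃ l ≤ k, qstart I l ≤ p ∧ ∀ m, l < m → m ≤ k → p < qstart I m :=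
    ⟨Nat.findGreatest (qstart I · ≤ p) k, Nat.findGreatest_le k,
      Nat.findGreatest_spec (P := (qstart I · ≤ p)) (Nat.zero_le k) hp0,
      fun m h1 h2 => not_le.1 (Nat.findGreatest_is_greatest (P := (qstart I · ≤ p)) h1 h2)⟩
  rcases hlk.lt_or_eq with hlk | rfl
  · have hlt := hgt (l + 1) (by omega) hlk
    have hs := qstart_succ I ⟨l, hlk⟩
    dsimp only at hs
    by_cases hI : (⟨l, hlk⟩ : Fin k) ∈ I
    · rw [if_pos hI] at hs
      exact Or.inl ⟨l, hlk.le, Or.inl (by omega)⟩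
    · rw [if_neg hI] at hs
      obtain h | h | h : p = qstart I l ∨ p = qstart I l + 1 ∨ p = qstart I l + 2 := by omega
      · exact Or.inl ⟨l, hlk.le, Or.inl h⟩
      · exact Or.inl ⟨l, hlk.le, Or.inr h⟩
      · exact Or.inr ⟨⟨l, hlk⟩, hI, h⟩
  · have := length_qdirs I
    exact Or.inl ⟨l, le_rfl, by omega⟩

lemma pathHeight_qdirs_le {p : ℕ} (hp : p ≤ (qdirs I).length) :
    pathHeight (qdirs I) p ≤ k + 2 := by
  rcases qdirs_vertex_cases I hp with rfl | ⟨l, hl, rfl | rfl⟩ | ⟨l, hl, rfl⟩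
  · rw [pathHeight_zero]; omega
  · rw [pathHeight_qstart I hl]; omega
  · rw [pathHeight_qstart_add_one I hl]; omega
  · rw [pathHeight_qstart_add_two, if_neg hl]; omega

lemma pathHeight_qdirs_pos {p : ℕ} (hp : p ≤ (qdirs I).length) (h0 : p ≠ 0) :
    0 < pathHeight (qdirs I) p := by
  rcases qdirs_vertex_cases I hp with rfl | ⟨l, hl, rfl | rfl⟩ | ⟨l, hl, rfl⟩
  · exact absurd rfl h0
  · rw [pathHeight_qstart I hl]; omega
  · rw [pathHeight_qstart_add_one I hl]; omega
  · rw [pathHeight_qstart_add_two, if_neg hl]; omega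

end QPath

section QPathHom

variable {k : ℕ} {I J : Finset (Fin k)} {φ : ℕ → ℕ}

lemma pathHom.qdirs_map_zero (hφ : pathHom (qdirs I) (qdirs J) φ) : φ 0 = 0 := by
  have hlen := length_qdirs I
  have h0 := (hφ.step (x := 0) (by omega)).2.1
  have hn := (hφ.step (x := qstart I k) (by omega)).2.2.1
  have hheight := hφ.pathHeight_map (x := qstart I k + 1) (by omega)
  rw [pathHeight_qstart_add_one I le_rfl] at hheight
  by_contra hne
  have := pathHeight_qdirs_pos J h0 hne
  have := pathHeight_qdirs_le J hn
  omega

lemma pathHom.qdirs_pathHeight_map (hφ : pathHom (qdirs I) (qdirs J) φ) {x : ℕ}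
    (hx : x ≤ (qdirs I).length) : pathHeight (qdirs J) (φ x) = pathHeight (qdirs I) x := by
  rw [hφ.pathHeight_map hx, hφ.qdirs_map_zero, pathHeight_zero, zero_add]

lemma pathHom.qdirs_step (hφ : pathHom (qdirs I) (qdirs J) φ) {x : ℕ}
    (hx : x < (qdirs I).length) :
    (φ (x + 1) = φ x + 1 ∨ φ x = φ (x + 1) + 1) ∧
      pathHeight (qdirs J) (φ (x + 1)) = pathHeight (qdirs I) (x + 1) :=
  ⟨(hφ.step hx).1, hφ.qdirs_pathHeight_map hx⟩

lemma pathHom.qdirs_map_succ_of_map_eq_qstart (hφ : pathHom (qdirs I) (qdirs J) φ) {x l : ℕ}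
    (hx : x < (qdirs I).length) (hup : (qdirs I).getD x false = true) (hl : l ≤ k)
    (hφx : φ x = qstart J l) : φ (x + 1) = qstart J l + 1 := by
  have h0 := hφ.qdirs_pathHeight_map hx.le
  rw [hφx, pathHeight_qstart J hl] at h0
  obtain ⟨h | h, hh⟩ := hφ.qdirs_step hx
  · rw [h, hφx]
  · rw [pathHeight_of_succ_eq_qstart J hl (h ▸ hφx), pathHeight_succ_of_true hup] at hh
    omega

lemma pathHom.qdirs_map_ne_peak (hφ : pathHom (qdirs I) (qdirs J) φ) {x : ℕ} {l : Fin k}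
    (hl : l ∉ J) (hx : x < (qdirs I).length) (hup : (qdirs I).getD x false = true) :
    φ x ≠ qstart J l + 1 := by
  intro hφx
  have h0 := hφ.qdirs_pathHeight_map hx.le
  have h2 := pathHeight_qstart_add_two J l
  rw [hφx, pathHeight_qstart_add_one J l.isLt.le] at h0
  rw [if_neg hl] at h2
  obtain ⟨h | h, hh⟩ := hφ.qdirs_step hx
  · rw [pathHeight_succ_of_true hup, h, hφx, h2] at hh; omega
  · rw [pathHeight_succ_of_true hup, show φ (x + 1) = qstart J l by omega,
      pathHeight_qstart J l.isLt.le] at hh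
    omega

lemma pathHom.qdirs_map_qstart_add_one (hφ : pathHom (qdirs I) (qdirs J) φ) {l : ℕ}
    (hl : l ≤ k) (hb : φ (qstart I l) = qstart J l) : φ (qstart I l + 1) = qstart J l + 1 :=
  hφ.qdirs_map_succ_of_map_eq_qstart (qstart_lt_length I l) (getD_qdirs_qstart I hl) hl hb

lemma pathHom.qdirs_mem_of_mem (hφ : pathHom (qdirs I) (qdirs J) φ) {l : Fin k}
    (hb : φ (qstart I l) = qstart J l) (hI : l ∈ I) : l ∈ J := by
  by_contra hJ
  have hs := qstart_succ I l
  rw [if_pos hI] at hs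
  refine hφ.qdirs_map_ne_peak hJ ?_ ?_ (hφ.qdirs_map_qstart_add_one l.isLt.le hb)
  · rw [← hs]; exact qstart_lt_length I _
  · rw [← hs]; exact getD_qdirs_qstart I l.isLt

lemma pathHom.qdirs_map_zigzag (hφ : pathHom (qdirs I) (qdirs J) φ) {l : Fin k}
    (hb : φ (qstart I l) = qstart J l) (hI : l ∉ I) :
    φ (qstart I l + 2) = (if l ∈ J then qstart J l else qstart J l + 2) ∧
      φ (qstart I (l + 1)) = qstart J (l + 1) := by
  have hsI := qstart_succ I l
  have hsJ := qstart_succ J l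
  have hI2 := pathHeight_qstart_add_two I l
  have hJ2 := pathHeight_qstart_add_two J l
  have hlen := qstart_add_three_lt_length I hI
  have hup3 : (qdirs I).getD (qstart I l + 3) false = true := by
    rw [if_neg hI] at hsI; rw [← hsI]; exact getD_qdirs_qstart I l.isLt
  have hup2 := (getD_qdirs_zigzag I hI).2
  rw [if_neg hI] at hsI hI2
  have h1 := hφ.qdirs_map_qstart_add_one l.isLt.le hb
  obtain ⟨h2, hh2⟩ := hφ.qdirs_step (x := qstart I l + 1) (by omega)
  simp only [add_assoc, Nat.reduceAdd] at h2 hh2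
  by_cases hJ : l ∈ J
  · rw [if_pos hJ] at hsJ hJ2 ⊢
    have hB : φ (qstart I l + 2) = qstart J l := by
      rcases h2 with h2 | h2
      · rw [h2, h1] at hh2
        rw [hJ2, hI2] at hh2; omega
      · omega
    refine ⟨hB, ?_⟩
    rw [hsI, hsJ]
    exact hφ.qdirs_map_succ_of_map_eq_qstart (x := qstart I l + 2) (by omega) hup2 l.isLt.le hB
  · rw [if_neg hJ] at hsJ hJ2 ⊢
    have hB : φ (qstart I l + 2) = qstart J l + 2 := by
      rcases h2 with h2 | h2
      · omega
      · have h3 := hφ.qdirs_map_succ_of_map_eq_qstart (x := qstart I l + 2) (by omega) hup2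
          l.isLt.le (by omega)
        exact absurd h3 (hφ.qdirs_map_ne_peak hJ (x := qstart I l + 3) hlen hup3)
    refine ⟨hB, ?_⟩
    obtain ⟨h3, -⟩ := hφ.qdirs_step (x := qstart I l + 2) (by omega)
    simp only [add_assoc, Nat.reduceAdd] at h3
    rcases h3 with h3 | h3
    · rw [hsI, hsJ]; omega
    · exact absurd (by omega) (hφ.qdirs_map_ne_peak hJ (x := qstart I l + 3) hlen hup3)

lemma pathHom.qdirs_map_qstart (hφ : pathHom (qdirs I) (qdirs J) φ) {l : ℕ} (hl : l ≤ k) :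
    φ (qstart I l) = qstart J l := by
  induction l with
  | zero =>
    obtain ⟨h, -⟩ := hφ.qdirs_step (x := 0) (by linarith [qstart_lt_length I 0])
    rw [zero_add, hφ.qdirs_map_zero] at h
    rw [qstart_zero, qstart_zero]
    omega
  | succ m ih =>
    have hm : m < k := by omega
    have hb := ih hm.le
    by_cases hI : (⟨m, hm⟩ : Fin k) ∈ I
    · have hJ := hφ.qdirs_mem_of_mem (l := ⟨m, hm⟩) hb hI
      have hsI := qstart_succ I ⟨m, hm⟩
      have hsJ := qstart_succ J ⟨m, hm⟩
      rw [if_pos hI] at hsI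
      rw [if_pos hJ] at hsJ
      rw [hsI, hsJ]
      exact hφ.qdirs_map_qstart_add_one hm.le hb
    · exact (hφ.qdirs_map_zigzag (l := ⟨m, hm⟩) hb hI).2

lemma pathHom.qdirs_subset (hφ : pathHom (qdirs I) (qdirs J) φ) : I ⊆ J := fun l hl =>
  hφ.qdirs_mem_of_mem (hφ.qdirs_map_qstart l.isLt.le) hl

lemma pathHom.qdirs_map_eq {ψ : ℕ → ℕ} (hφ : pathHom (qdirs I) (qdirs J) φ)
    (hψ : pathHom (qdirs I) (qdirs J) ψ) {x : ℕ} (hx : x ≤ (qdirs I).length) : φ x = ψ x := by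
  rcases qdirs_vertex_cases I hx with rfl | ⟨l, hl, rfl | rfl⟩ | ⟨l, hl, rfl⟩
  · rw [hφ.qdirs_map_zero, hψ.qdirs_map_zero]
  · rw [hφ.qdirs_map_qstart hl, hψ.qdirs_map_qstart hl]
  · rw [hφ.qdirs_map_qstart_add_one hl (hφ.qdirs_map_qstart hl),
      hψ.qdirs_map_qstart_add_one hl (hψ.qdirs_map_qstart hl)]
  · rw [(hφ.qdirs_map_zigzag (hφ.qdirs_map_qstart l.isLt.le) hl).1,
      (hψ.qdirs_map_zigzag (hψ.qdirs_map_qstart l.isLt.le) hl).1]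

lemma pathHom.qdirs_exists_map_eq (hφ : pathHom (qdirs I) (qdirs J) φ) {y : ℕ}
    (hy : y ≤ (qdirs J).length) : ∃ x ≤ (qdirs I).length, φ x = y := by
  rcases qdirs_vertex_cases J hy with rfl | ⟨l, hl, rfl | rfl⟩ | ⟨l, hl, rfl⟩
  · exact ⟨0, Nat.zero_le _, hφ.qdirs_map_zero⟩
  · exact ⟨qstart I l, (qstart_lt_length I l).le, hφ.qdirs_map_qstart hl⟩
  · exact ⟨qstart I l + 1, qstart_lt_length I l,
      hφ.qdirs_map_qstart_add_one hl (hφ.qdirs_map_qstart hl)⟩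
  · have hI : l ∉ I := fun h => hl (hφ.qdirs_subset h)
    refine ⟨qstart I l + 2, by linarith [qstart_add_three_lt_length I hI], ?_⟩
    rw [(hφ.qdirs_map_zigzag (hφ.qdirs_map_qstart l.isLt.le) hI).1, if_neg hl]

end QPathHom

section Existence

variable {k : ℕ}

lemma val_lt_of_mem_take_finRange {l : ℕ} {j : Fin k} (h : j ∈ (List.finRange k).take l) :
    (j : ℕ) < l := by
  obtain ⟨i, hi, rfl⟩ := List.mem_take_iff_getElem.1 h
  simp only [List.getElem_finRange, Fin.val_cast]
  omega

lemma le_val_of_mem_drop_finRange {l : ℕ} {j : Fin k} (h : j ∈ (List.finRange k).drop l) :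
    l ≤ (j : ℕ) := by
  obtain ⟨i, hi, rfl⟩ := List.mem_drop_iff_getElem.1 h
  simp only [List.getElem_finRange, Fin.val_cast]
  omega

lemma qblock_insert_of_ne (I : Finset (Fin k)) {l j : Fin k} (h : j ≠ l) :
    qblock (insert l I) j = qblock I j := by
  simp [qblock, h]

lemma exists_pathHom_qdirs_insert {I : Finset (Fin k)} {l : Fin k} (hl : l ∉ I) :
    ∃ φ, pathHom (qdirs I) (qdirs (insert l I)) φ := by
  have hpre : ((List.finRange k).take l).flatMap (qblock (insert l I)) =
      ((List.finRange k).take l).flatMap (qblock I) :=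
    List.flatMap_congr fun j hj => qblock_insert_of_ne I (by
      have := val_lt_of_mem_take_finRange hj; rintro rfl; omega)
  have hsuf : qsuffix (insert l I) (l + 1) = qsuffix I (l + 1) := by
    rw [qsuffix, qsuffix, List.flatMap_congr fun j hj => qblock_insert_of_ne I (by
      have := le_val_of_mem_drop_finRange hj; rintro rfl; omega)]
  rw [qdirs_eq_append I l, qsuffix_of_lt, qblock, if_neg hl,
    qdirs_eq_append (insert l I) l, qsuffix_of_lt, qblock, if_pos (Finset.mem_insert_self l I),
    hpre, hsuf]
  exact ⟨_, pathHom_fold _ _⟩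

lemma exists_pathHom_qdirs_of_subset {I J : Finset (Fin k)} (h : I ⊆ J) :
    ∃ φ, pathHom (qdirs I) (qdirs J) φ := by
  suffices ∀ s : Finset (Fin k), Disjoint s I → ∃ φ, pathHom (qdirs I) (qdirs (s ∪ I)) φ by
    simpa [Finset.sdiff_union_of_subset h] using this (J \ I) Finset.sdiff_disjoint
  intro s
  induction s using Finset.induction_on with
  | empty => exact fun _ => ⟨id, by simpa using pathHom_id _⟩
  | insert a s ha ih =>
    intro hd
    rw [Finset.disjoint_insert_left] at hd
    obtain ⟨φ, hφ⟩ := ih hd.2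
    obtain ⟨ψ, hψ⟩ := exists_pathHom_qdirs_insert (I := s ∪ I) (l := a)
      (by simp [ha, hd.1])
    exact ⟨ψ ∘ φ, by rw [Finset.insert_union]; exact hψ.comp hφ⟩

end Existence

theorem qdirs_hom_iff_subset_general {k : ℕ} (I J : Finset (Fin k)) :
    ((∃ φ : ℕ → ℕ, pathHom (qdirs I) (qdirs J) φ) ↔ I ⊆ J) ∧
    (∀ φ ψ : ℕ → ℕ, pathHom (qdirs I) (qdirs J) φ → pathHom (qdirs I) (qdirs J) ψ →
      ∀ x ≤ (qdirs I).length, φ x = ψ x) ∧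
    (∀ φ : ℕ → ℕ, pathHom (qdirs I) (qdirs J) φ →
      ∀ y ≤ (qdirs J).length, ∃ x ≤ (qdirs I).length, φ x = y) :=
  ⟨⟨fun ⟨_, hφ⟩ => hφ.qdirs_subset, exists_pathHom_qdirs_of_subset⟩,
    fun _ _ hφ hψ _ hx => hφ.qdirs_map_eq hψ hx,
    fun _ hφ _ hy => hφ.qdirs_exists_map_eq hy⟩

/-- A homomorphism `Q_I → Q_J` exists iff `I ⊆ J`; moreover any such homomorphism
is unique and surjective (onto the vertices of `Q_J`). -/
theorem qdirs_hom_iff_subset {k : ℕ} (hk : 1 ≤ k) (I J : Finset (Fin k)) :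
    ((∃ φ : ℕ → ℕ, pathHom (qdirs I) (qdirs J) φ) ↔ I ⊆ J) ∧
    (∀ φ ψ : ℕ → ℕ, pathHom (qdirs I) (qdirs J) φ → pathHom (qdirs I) (qdirs J) ψ →
      ∀ x ≤ (qdirs I).length, φ x = ψ x) ∧
    (∀ φ : ℕ → ℕ, pathHom (qdirs I) (qdirs J) φ →
      ∀ y ≤ (qdirs J).length, ∃ x ≤ (qdirs I).length, φ x = y) :=
  qdirs_hom_iff_subset_general I J
end

section
/- Let A = (A; R) be a finite relational structure with a single k-ary nonempty relation R. The number of vertices of the digraph D(A) is (3k+1)|R||A| + (1−2k)|R| + |A|, and the number of edges is (3k+2)|R||A| − 2k|R|. -/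
/-- The positions `i ∈ [k]` at which `a` equals the `i`-th entry of `r`. -/
def idxSet {A : Type} [DecidableEq A] {k : ℕ} (a : A) (r : Fin k → A) : Finset (Fin k) :=
  Finset.univ.filter (fun i => a = r i)

/-- Number of edges of the connecting path `P_(a,r) = Q_{idxSet a r}`. -/
def plen {A : Type} [DecidableEq A] {k : ℕ} (a : A) (r : Fin k → A) : ℕ :=
  (qdirs (idxSet a r)).length

/-- Vertices of the digraph `D(A)` for the structure `(A; R)`. -/
inductive DVert {A : Type} [DecidableEq A] {k : ℕ} (R : Set (Fin k → A)) : Type where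
  | base : A → DVert R
  | top : (r : Fin k → A) → r ∈ R → DVert R
  | inner : (a : A) → (r : Fin k → A) → r ∈ R → (j : ℕ) → 0 < j → j < plen a r → DVert R

/-- `isAt v a r x` : vertex `v` of `D(A)` sits at position `x` of the connecting path
`P_(a,r)`. -/
def isAt {A : Type} [DecidableEq A] {k : ℕ} {R : Set (Fin k → A)} :
    DVert R → A → (Fin k → A) → ℕ → Prop
  | .base a', a, _, x => a' = a ∧ x = 0
  | .top r' _, a, r, x => r' = r ∧ x = plen a r
  | .inner a' r' _ j _ _, a, r, x => a' = a ∧ r' = r ∧ x = j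

/-- The edge relation of the digraph `D(A)`. -/
def dedge {A : Type} [DecidableEq A] {k : ℕ} {R : Set (Fin k → A)}
    (u v : DVert R) : Prop :=
  ∃ a r, r ∈ R ∧ ∃ x y, isAt u a r x ∧ isAt v a r y ∧
    pedge (qdirs (idxSet a r)) x y

/-- Height of position `x` along a path with direction pattern `ds`. -/
def phgt (ds : List Bool) (x : ℕ) : ℤ :=
  ((ds.take x).count true : ℤ) - ((ds.take x).count false : ℤ)

/-- The level function of the balanced digraph `D(A)`. -/
def lvlD {A : Type} [DecidableEq A] {k : ℕ} {R : Set (Fin k → A)} : DVert R → ℕ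
  | .base _ => 0
  | .top _ _ => k + 2
  | .inner a r _ j _ _ => (phgt (qdirs (idxSet a r)) j).toNat

/-- `walkAlong ds u v` : one can walk in `D(A)` from `u` to `v` following the
oriented path with direction pattern `ds` (i.e. there is a homomorphism of the path
into `D(A)` sending the initial vertex to `u` and the terminal vertex to `v`). -/
def walkAlong {A : Type} [DecidableEq A] {k : ℕ} {R : Set (Fin k → A)}
    (ds : List Bool) (u v : DVert R) : Prop :=
  ∃ φ : ℕ → DVert R, φ 0 = u ∧ φ ds.length = v ∧
    ∀ x < ds.length,
      (ds.getD x false = true → dedge (φ x) (φ (x + 1))) ∧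
      (ds.getD x false = false → dedge (φ (x + 1)) (φ x))

section Aux

variable {A : Type} [DecidableEq A] {k : ℕ}

lemma idxSet_card_le (a : A) (r : Fin k → A) : (idxSet a r).card ≤ k := by
  have := Finset.card_filter_le (Finset.univ : Finset (Fin k)) (fun i => a = r i)
  simpa [idxSet] using this

lemma plen_add_eq (a : A) (r : Fin k → A) :
    plen a r + 2 * (idxSet a r).card = 3 * k + 2 := by
  classical
  have h : ((List.finRange k).flatMap
      (fun l => if l ∈ idxSet a r then [true] else [true, false, true])).length
      = ∑ l : Fin k, (if l ∈ idxSet a r then 1 else 3) := by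
    rw [List.length_flatMap, Fin.sum_univ_def]
    congr 1
    congr 1
    funext l
    by_cases hl : l ∈ idxSet a r <;> simp [hl]
  have h2 : (idxSet a r).card = ∑ l : Fin k, (if l ∈ idxSet a r then 1 else 0) := by
    rw [Finset.sum_ite_mem, Finset.univ_inter]
    exact Finset.card_eq_sum_ones _
  have h3 : (∑ l : Fin k, (if l ∈ idxSet a r then 1 else 3))
      + 2 * ∑ l : Fin k, (if l ∈ idxSet a r then 1 else 0) = 3 * k := by
    rw [Finset.mul_sum, ← Finset.sum_add_distrib]
    have : ∀ l : Fin k, ((if l ∈ idxSet a r then 1 else 3)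
        + 2 * (if l ∈ idxSet a r then 1 else 0)) = 3 := by
      intro l; by_cases hl : l ∈ idxSet a r <;> simp [hl]
    simp only [this]
    simp [Finset.sum_const, Finset.card_univ, Nat.mul_comm]
  unfold plen qdirs
  rw [List.length_append, List.length_append]
  simp only [List.length_singleton]
  omega

lemma sum_idxSet_card (r : Fin k → A) [Fintype A] :
    ∑ a : A, (idxSet a r).card = k := by
  classical
  unfold idxSet
  simp only [Finset.card_filter]
  rw [Finset.sum_comm]
  simp [Finset.sum_ite_eq']

variable {R : Set (Fin k → A)}

lemma two_le_plen (a : A) (r : Fin k → A) : 2 ≤ plen a r := by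
  have h := plen_add_eq a r; have h2 := idxSet_card_le a r; omega

/-- Vertex at position `x` of the path `P_(a,r)`. -/
def vertexAt (a : A) (r : Fin k → A) (hr : r ∈ R) (x : ℕ) : DVert R :=
  if h0 : x = 0 then .base a
  else if hx : x < plen a r then .inner a r hr x (Nat.pos_of_ne_zero h0) hx
  else .top r hr

lemma isAt_vertexAt (a : A) (r : Fin k → A) (hr : r ∈ R) (x : ℕ) (hx : x ≤ plen a r) :
    isAt (vertexAt a r hr x) a r x := by
  unfold vertexAt
  split
  · simp [isAt, *]
  · split
    · simp [isAt]
    · have : x = plen a r := by omega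
      simp [isAt, this]

lemma eq_vertexAt_of_isAt {u : DVert R} {a : A} {r : Fin k → A} (hr : r ∈ R) {x : ℕ}
    (h : isAt u a r x) (hx : x ≤ plen a r) : u = vertexAt a r hr x := by
  have h2 := two_le_plen a r
  cases u with
  | base a' =>
    obtain ⟨rfl, rfl⟩ := h
    simp [vertexAt]
  | top r' hr' =>
    obtain ⟨h1, h4⟩ := h
    subst h1; subst h4
    have hne : plen a r' ≠ 0 := by omega
    simp [vertexAt, hne]
  | inner a' r' hr' j hj1 hj2 =>
    obtain ⟨h1, h5, h3⟩ := h
    subst h1; subst h5; subst h3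
    have hne : x ≠ 0 := by omega
    simp [vertexAt, hne, hj2]

end Aux
section Aux2

variable {A : Type} [DecidableEq A] {k : ℕ} {R : Set (Fin k → A)}

lemma inner_eq (a : A) (r : Fin k → A) (hr hr' : r ∈ R) {j j' : ℕ} (h : j = j')
    (p : 0 < j) (q : j < plen a r) (p' : 0 < j') (q' : j' < plen a r) :
    DVert.inner a r hr j p q = DVert.inner a r hr' j' p' q' := by subst h; rfl

lemma vertexAt_zero (a : A) (r : Fin k → A) (hr : r ∈ R) :
    vertexAt a r hr 0 = .base a := by simp [vertexAt]

lemma vertexAt_inner (a : A) (r : Fin k → A) (hr : r ∈ R) {x : ℕ}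
    (h1 : 0 < x) (h2 : x < plen a r) :
    vertexAt a r hr x = .inner a r hr x h1 h2 := by
  have : x ≠ 0 := by omega
  simp [vertexAt, this, h2]

lemma vertexAt_top (a : A) (r : Fin k → A) (hr : r ∈ R) :
    vertexAt a r hr (plen a r) = .top r hr := by
  have h2 := two_le_plen a r
  have : plen a r ≠ 0 := by omega
  simp [vertexAt, this]

/-- The sum type enumerating the vertices of `D(A)`. -/
abbrev VSum (R : Set (Fin k → A)) : Type :=
  A ⊕ (↥R ⊕ Σ a : A, Σ r : ↥R, Fin (plen a r.1 - 1))

def vG : VSum R → DVert R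
  | .inl a => .base a
  | .inr (.inl r) => .top r.1 r.2
  | .inr (.inr ⟨a, r, i⟩) => .inner a r.1 r.2 (i.1 + 1) (Nat.succ_pos _) (by omega)

def vGinv : DVert R → VSum R
  | .base a => .inl a
  | .top r hr => .inr (.inl ⟨r, hr⟩)
  | .inner a r hr j hj1 hj2 => .inr (.inr ⟨a, ⟨r, hr⟩, ⟨j - 1, show j - 1 < plen a r - 1 by omega⟩⟩)

noncomputable def vEquiv : DVert R ≃ VSum R where
  toFun := vGinv
  invFun := vG
  left_inv := by
    intro v
    cases v with
    | base a => rfl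
    | top r hr => rfl
    | inner a r hr j hj1 hj2 =>
      show DVert.inner a r hr (j - 1 + 1) _ _ = _
      exact inner_eq a r hr hr (by omega) _ _ _ _
  right_inv := by
    intro t
    rcases t with a | r | ⟨a, r, i⟩
    · rfl
    · rfl
    · obtain ⟨r, hr⟩ := r
      obtain ⟨iv, hiv⟩ := i
      have hiv' : iv < plen a r - 1 := hiv
      have hfin : (⟨iv + 1 - 1, show iv + 1 - 1 < plen a r - 1 by omega⟩ : Fin (plen a r - 1))
          = ⟨iv, hiv⟩ := Fin.ext (show iv + 1 - 1 = iv by omega)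
      calc vGinv (vG (Sum.inr (Sum.inr ⟨a, ⟨r, hr⟩, ⟨iv, hiv⟩⟩)))
          = Sum.inr (Sum.inr ⟨a, ⟨r, hr⟩,
              (⟨iv + 1 - 1, show iv + 1 - 1 < plen a r - 1 by omega⟩ : Fin (plen a r - 1))⟩) := rfl
        _ = _ := by rw [hfin]

/-- The sigma type enumerating the edges of `D(A)`. -/
abbrev ESum (R : Set (Fin k → A)) : Type := Σ a : A, Σ r : ↥R, Fin (plen a r.1)

def eFc (a : A) (r : ↥R) (i : Fin (plen a r.1)) : {p : DVert R × DVert R // dedge p.1 p.2} :=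
  if h : (qdirs (idxSet a r.1)).getD i.1 false = true then
    ⟨(vertexAt a r.1 r.2 i.1, vertexAt a r.1 r.2 (i.1 + 1)),
      ⟨a, r.1, r.2, i.1, i.1 + 1,
        isAt_vertexAt a r.1 r.2 i.1 (Nat.le_of_lt i.isLt),
        isAt_vertexAt a r.1 r.2 (i.1 + 1) i.isLt,
        Or.inl ⟨rfl, i.isLt, h⟩⟩⟩
  else
    ⟨(vertexAt a r.1 r.2 (i.1 + 1), vertexAt a r.1 r.2 i.1),
      ⟨a, r.1, r.2, i.1 + 1, i.1,
        isAt_vertexAt a r.1 r.2 (i.1 + 1) i.isLt,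
        isAt_vertexAt a r.1 r.2 i.1 (Nat.le_of_lt i.isLt),
        Or.inr ⟨rfl, i.isLt, by simpa using h⟩⟩⟩

def eF : ESum R → {p : DVert R × DVert R // dedge p.1 p.2} := fun t => eFc t.1 t.2.1 t.2.2

lemma eFc_val_pos (a : A) (r : ↥R) (i : Fin (plen a r.1))
    (h : (qdirs (idxSet a r.1)).getD i.1 false = true) :
    (eFc a r i).1 = (vertexAt a r.1 r.2 i.1, vertexAt a r.1 r.2 (i.1 + 1)) := by
  unfold eFc; rw [dif_pos h]

lemma eFc_val_neg (a : A) (r : ↥R) (i : Fin (plen a r.1))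
    (h : ¬ (qdirs (idxSet a r.1)).getD i.1 false = true) :
    (eFc a r i).1 = (vertexAt a r.1 r.2 (i.1 + 1), vertexAt a r.1 r.2 i.1) := by
  unfold eFc; rw [dif_neg h]

def edata : DVert R × DVert R → Option (A × (Fin k → A) × ℕ)
  | (.inner a r _ j _ _, .inner _ _ _ j' _ _) => some (a, r, min j j')
  | (.inner a r _ _ _ _, .base _) => some (a, r, 0)
  | (.base _, .inner a r _ _ _ _) => some (a, r, 0)
  | (.inner a r _ j _ _, .top _ _) => some (a, r, j)
  | (.top _ _, .inner a r _ j _ _) => some (a, r, j)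
  | _ => none

lemma edata_eF (a : A) (r : ↥R) (i : Fin (plen a r.1)) :
    edata (eF (⟨a, r, i⟩ : ESum R)).1 = some (a, r.1, i.1) := by
  have h2 := two_le_plen a r.1
  have hi : i.1 < plen a r.1 := i.isLt
  have key : ∀ (p : DVert R × DVert R),
      (p = (vertexAt a r.1 r.2 i.1, vertexAt a r.1 r.2 (i.1 + 1)) ∨
       p = (vertexAt a r.1 r.2 (i.1 + 1), vertexAt a r.1 r.2 i.1)) →
      edata p = some (a, r.1, i.1) := by
    rintro p (rfl | rfl) <;>
    · rcases Nat.eq_zero_or_pos i.1 with h0 | h0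
      · rw [h0, vertexAt_zero, vertexAt_inner a r.1 r.2 (Nat.succ_pos 0) (by omega)]
        rfl
      · rcases Nat.lt_or_ge (i.1 + 1) (plen a r.1) with h1 | h1
        · rw [vertexAt_inner a r.1 r.2 h0 hi, vertexAt_inner a r.1 r.2 (Nat.succ_pos _) h1]
          simp only [edata, Option.some.injEq, Prod.mk.injEq, true_and]
          omega
        · have he : i.1 + 1 = plen a r.1 := by omega
          rw [vertexAt_inner a r.1 r.2 h0 hi, he, vertexAt_top]
          rfl
  show edata (eFc a r i).1 = some (a, r.1, i.1)
  by_cases hd : (qdirs (idxSet a r.1)).getD i.1 false = true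
  · rw [eFc_val_pos a r i hd]
    exact key _ (Or.inl rfl)
  · rw [eFc_val_neg a r i hd]
    exact key _ (Or.inr rfl)

lemma eF_injective : Function.Injective (eF (R := R)) := by
  rintro ⟨a, r, i⟩ ⟨a', r', i'⟩ h
  have e1 := edata_eF a r i
  have e2 := edata_eF a' r' i'
  rw [h, e2] at e1
  obtain ⟨rfl, h2, h3⟩ : a' = a ∧ r'.1 = r.1 ∧ i'.1 = i.1 := by
    simpa [Prod.ext_iff] using e1
  obtain rfl : r' = r := Subtype.ext h2
  obtain rfl : i' = i := Fin.ext h3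
  rfl

lemma eF_surjective : Function.Surjective (eF (R := R)) := by
  rintro ⟨⟨u, v⟩, hd⟩
  obtain ⟨a, r, hr, x, y, hu, hv, hpe⟩ := hd
  have hlen : plen a r = (qdirs (idxSet a r)).length := rfl
  rcases hpe with ⟨hy, hx, hds⟩ | ⟨hx, hy, hds⟩
  · refine ⟨⟨a, ⟨r, hr⟩, ⟨x, hx⟩⟩, Subtype.ext ?_⟩
    have h1 : u = vertexAt a r hr x := eq_vertexAt_of_isAt hr hu (by omega)
    have h2 : v = vertexAt a r hr (x + 1) := by
      rw [← hy]; exact eq_vertexAt_of_isAt hr hv (by omega)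
    show (eFc a ⟨r, hr⟩ ⟨x, hx⟩).1 = (u, v)
    rw [eFc_val_pos a ⟨r, hr⟩ ⟨x, hx⟩ hds, h1, h2]
  · refine ⟨⟨a, ⟨r, hr⟩, ⟨y, hy⟩⟩, Subtype.ext ?_⟩
    have h1 : u = vertexAt a r hr (y + 1) := by
      rw [← hx]; exact eq_vertexAt_of_isAt hr hu (by omega)
    have h2 : v = vertexAt a r hr y := eq_vertexAt_of_isAt hr hv (by omega)
    show (eFc a ⟨r, hr⟩ ⟨y, hy⟩).1 = (u, v)
    rw [eFc_val_neg a ⟨r, hr⟩ ⟨y, hy⟩ (by rw [hds]; exact Bool.false_ne_true), h1, h2]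

lemma sum_plen [Fintype A] (r : Fin k → A) :
    ∑ a : A, (plen a r : ℤ) = (3 * k + 2) * Fintype.card A - 2 * k := by
  have h : ∀ a : A, (plen a r : ℤ) = (3 * k + 2) - 2 * (idxSet a r).card := by
    intro a
    have := plen_add_eq a r
    have : (plen a r : ℤ) + 2 * (idxSet a r).card = 3 * k + 2 := by exact_mod_cast this
    linarith
  rw [Finset.sum_congr rfl (fun a _ => h a), Finset.sum_sub_distrib,
    Finset.sum_const, ← Finset.mul_sum]
  have h2 : ∑ a : A, ((idxSet a r).card : ℤ) = k := by
    rw [← Nat.cast_sum, sum_idxSet_card]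
  rw [h2, Finset.card_univ]
  ring

end Aux2
/-- Counting the vertices and edges of `D(A)`: the number of vertices is
`(3k+1)|R||A| + (1-2k)|R| + |A|` and the number of edges is
`(3k+2)|R||A| - 2k|R|`. -/
theorem D_card_vertices_edges {A : Type} [DecidableEq A] [Fintype A] {k : ℕ}
    (R : Set (Fin k → A)) :
    (Nat.card (DVert R) : ℤ) =
      (3 * k + 1) * Nat.card R * Nat.card A + (1 - 2 * (k : ℤ)) * Nat.card R
        + Nat.card A ∧
    (Nat.card {p : DVert R × DVert R // dedge p.1 p.2} : ℤ) =
      (3 * k + 2) * Nat.card R * Nat.card A - 2 * (k : ℤ) * Nat.card R := by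
  classical
  haveI : Fintype ↥R := Fintype.ofFinite _
  have hv : Nat.card (DVert R) = Nat.card (VSum R) := Nat.card_congr vEquiv
  have he : Nat.card (ESum R) = Nat.card {p : DVert R × DVert R // dedge p.1 p.2} :=
    Nat.card_eq_of_bijective eF ⟨eF_injective, eF_surjective⟩
  have hsum2 : ∀ r : ↥R, ∑ a : A, ((plen a r.1 - 1 : ℕ) : ℤ)
      = (3 * k + 1) * Fintype.card A - 2 * k := by
    intro r
    have h1 : ∀ a : A, ((plen a r.1 - 1 : ℕ) : ℤ) = (plen a r.1 : ℤ) - 1 := fun a =>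
      Nat.cast_sub (by have := two_le_plen a r.1; omega)
    rw [Finset.sum_congr rfl (fun a _ => h1 a), Finset.sum_sub_distrib, sum_plen,
      Finset.sum_const, Finset.card_univ, nsmul_eq_mul]
    ring
  constructor
  · rw [hv, Nat.card_eq_fintype_card]
    have hcard : Fintype.card (VSum R)
        = Fintype.card A + (Fintype.card ↥R + ∑ a : A, ∑ r : ↥R, (plen a r.1 - 1)) := by
      simp [VSum]
    rw [hcard]
    push_cast
    rw [Finset.sum_comm, Finset.sum_congr rfl (fun (r : ↥R) _ => hsum2 r),
      Finset.sum_const, Finset.card_univ, nsmul_eq_mul]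
    simp only [Nat.card_eq_fintype_card]
    ring
  · rw [← he, Nat.card_eq_fintype_card]
    have hcard : Fintype.card (ESum R) = ∑ a : A, ∑ r : ↥R, plen a r.1 := by
      simp [ESum]
    rw [hcard]
    push_cast
    rw [Finset.sum_comm, Finset.sum_congr rfl (fun (r : ↥R) _ => sum_plen r.1),
      Finset.sum_const, Finset.card_univ, nsmul_eq_mul]
    simp only [Nat.card_eq_fintype_card]
    ring
end

section
/- Every endomorphism φ of the finite relational structure A = (A; R) extends to an endomorphism φ̄ of the digraph D(A), defined on A by φ, on R by the coordinatewise application φ^{(k)}, and on internal path vertices via the unique path homomorphisms P_{(a,r)} → P_{(φ(a), φ^{(k)}(r))}. -/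
theorem phgt_zero (ds : List Bool) : phgt ds 0 = 0 := by
  simp [phgt]

theorem phgt_append (d₁ d₂ : List Bool) (x : ℕ) :
    phgt (d₁ ++ d₂) x = phgt d₁ x + phgt d₂ (x - d₁.length) := by
  simp only [phgt, List.take_append, List.count_append]
  push_cast
  ring

theorem phgt_of_length_le {ds : List Bool} {x : ℕ} (h : ds.length ≤ x) :
    phgt ds x = phgt ds ds.length := by
  simp [phgt, List.take_of_length_le h]

theorem phgt_succ {ds : List Bool} {x : ℕ} (hx : x < ds.length) :
    phgt ds (x + 1) = phgt ds x + if ds.getD x false then 1 else -1 := by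
  simp only [phgt, List.take_add_one, List.getElem?_eq_getElem hx, List.getD_eq_getElem?_getD,
    Option.toList_some, List.count_append, Option.getD_some]
  split <;> simp_all <;> ring

theorem phgt_of_pedge {ds : List Bool} {x y : ℕ} (h : pedge ds x y) :
    phgt ds y = phgt ds x + 1 := by
  rcases h with ⟨rfl, hx, hd⟩ | ⟨rfl, hy, hd⟩
  · rw [phgt_succ hx, hd, if_pos rfl]
  · rw [phgt_succ hy, hd]
    simp

theorem pedge_or_pedge_succ {ds : List Bool} {x : ℕ} (hx : x < ds.length) :
    pedge ds x (x + 1) ∨ pedge ds (x + 1) x := by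
  cases hd : ds.getD x false
  · exact Or.inr (Or.inr ⟨rfl, hx, hd⟩)
  · exact Or.inl (Or.inl ⟨rfl, hx, hd⟩)

theorem pedge_append_left {d₁ d₂ : List Bool} {x y : ℕ} (h : pedge d₁ x y) :
    pedge (d₁ ++ d₂) x y := by
  have hlen : d₁.length ≤ (d₁ ++ d₂).length := by simp
  rcases h with ⟨rfl, hx, hd⟩ | ⟨rfl, hy, hd⟩
  · exact Or.inl ⟨rfl, by omega, by rwa [List.getD_append _ _ _ _ hx]⟩
  · exact Or.inr ⟨rfl, by omega, by rwa [List.getD_append _ _ _ _ hy]⟩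

theorem pedge_append_right {d₁ d₂ : List Bool} {x y : ℕ} (h : pedge d₂ x y) :
    pedge (d₁ ++ d₂) (d₁.length + x) (d₁.length + y) := by
  have hlen : (d₁ ++ d₂).length = d₁.length + d₂.length := List.length_append
  rcases h with ⟨rfl, hx, hd⟩ | ⟨rfl, hy, hd⟩
  · refine Or.inl ⟨by ring, by omega, ?_⟩
    rwa [List.getD_append_right _ _ _ _ (by omega), Nat.add_sub_cancel_left]
  · refine Or.inr ⟨by ring, by omega, ?_⟩
    rwa [List.getD_append_right _ _ _ _ (by omega), Nat.add_sub_cancel_left]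

theorem le_length_of_pedge {ds : List Bool} {x y : ℕ} (h : pedge ds x y) :
    x ≤ ds.length ∧ y ≤ ds.length := by
  rcases h with ⟨rfl, hx, -⟩ | ⟨rfl, hy, -⟩ <;> omega

theorem pedge_append_cases {d₁ d₂ : List Bool} {x y : ℕ} (h : pedge (d₁ ++ d₂) x y) :
    pedge d₁ x y ∨
      d₁.length ≤ x ∧ d₁.length ≤ y ∧ pedge d₂ (x - d₁.length) (y - d₁.length) := by
  by_cases hlt : min x y < d₁.length
  · left
    rcases h with ⟨rfl, -, hd⟩ | ⟨rfl, -, hd⟩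
    · have hx : x < d₁.length := by omega
      exact Or.inl ⟨rfl, hx, by rwa [List.getD_append _ _ _ _ hx] at hd⟩
    · have hy : y < d₁.length := by omega
      exact Or.inr ⟨rfl, hy, by rwa [List.getD_append _ _ _ _ hy] at hd⟩
  · right
    refine ⟨by omega, by omega, ?_⟩
    rcases h with ⟨rfl, hx, hd⟩ | ⟨rfl, hy, hd⟩
    · refine Or.inl ⟨by omega, by simp only [List.length_append] at hx; omega, ?_⟩
      rwa [List.getD_append_right _ _ _ _ (by omega)] at hd
    · refine Or.inr ⟨by omega, by simp only [List.length_append] at hy; omega, ?_⟩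
      rwa [List.getD_append_right _ _ _ _ (by omega)] at hd

structure IsPathHom (ds ds' : List Bool) (f : ℕ → ℕ) : Prop where
  map_zero : f 0 = 0
  map_length : f ds.length = ds'.length
  map_pedge : ∀ {x y}, pedge ds x y → pedge ds' (f x) (f y)

namespace IsPathHom

theorem id (ds : List Bool) : IsPathHom ds ds id :=
  ⟨rfl, rfl, fun h => h⟩

theorem zigzag : IsPathHom [true, false, true] [true] (· % 2) := by
  refine ⟨rfl, rfl, ?_⟩
  rintro x y (⟨rfl, hx, hd⟩ | ⟨rfl, hy, hd⟩)
  · simp only [List.length_cons, List.length_nil] at hx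
    interval_cases x <;> simp_all [pedge]
  · simp only [List.length_cons, List.length_nil] at hy
    interval_cases y <;> simp_all [pedge]

theorem phgt_map {ds ds' : List Bool} {f : ℕ → ℕ} (hf : IsPathHom ds ds' f) :
    ∀ x ≤ ds.length, phgt ds' (f x) = phgt ds x
  | 0, _ => by rw [hf.map_zero, phgt_zero, phgt_zero]
  | x + 1, hx => by
    have ih := hf.phgt_map x (by omega)
    rcases pedge_or_pedge_succ (by omega : x < ds.length) with h | h
    · linarith [phgt_of_pedge h, phgt_of_pedge (hf.map_pedge h)]
    · linarith [phgt_of_pedge h, phgt_of_pedge (hf.map_pedge h)]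

theorem append {d₁ d₁' d₂ d₂' : List Bool} {f g : ℕ → ℕ}
    (hf : IsPathHom d₁ d₁' f) (hg : IsPathHom d₂ d₂' g) :
    IsPathHom (d₁ ++ d₂) (d₁' ++ d₂')
      (fun x => if x ≤ d₁.length then f x else d₁'.length + g (x - d₁.length)) := by
  have right : ∀ x, d₁.length ≤ x →
      (if x ≤ d₁.length then f x else d₁'.length + g (x - d₁.length)) =
        d₁'.length + g (x - d₁.length) := by
    intro x hx
    split_ifs with h
    · rw [le_antisymm h hx, hf.map_length, Nat.sub_self, hg.map_zero, Nat.add_zero]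
    · rfl
  refine ⟨by simp [hf.map_zero], ?_, fun hxy => ?_⟩
  · rw [List.length_append, right _ (by omega), Nat.add_sub_cancel_left, hg.map_length,
      List.length_append]
  · rcases pedge_append_cases hxy with h | ⟨hx, hy, h⟩
    · obtain ⟨hx, hy⟩ := le_length_of_pedge h
      simpa only [if_pos hx, if_pos hy] using pedge_append_left (hf.map_pedge h)
    · simpa only [right _ hx, right _ hy] using pedge_append_right (hg.map_pedge h)

theorem exists_flatMap {ι : Type*} (L : List ι) {g g' : ι → List Bool}
    (h : ∀ i ∈ L, ∃ f, IsPathHom (g i) (g' i) f) :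
    ∃ F, IsPathHom (L.flatMap g) (L.flatMap g') F := by
  induction L with
  | nil => exact ⟨_, id []⟩
  | cons i L ih =>
    obtain ⟨f, hf⟩ := h i (by simp)
    obtain ⟨F, hF⟩ := ih fun j hj => h j (by simp [hj])
    exact ⟨_, hf.append hF⟩

end IsPathHom

theorem phgt_flatMap {ι : Type*} (L : List ι) {g : ι → List Bool}
    (hg : ∀ i ∈ L, phgt (g i) (g i).length = 1 ∧ ∀ t, 0 ≤ phgt (g i) t ∧ phgt (g i) t ≤ 1) :
    phgt (L.flatMap g) (L.flatMap g).length = L.length ∧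
      ∀ t, 0 ≤ phgt (L.flatMap g) t ∧ phgt (L.flatMap g) t ≤ L.length := by
  induction L with
  | nil => simp [phgt]
  | cons i L ih =>
    obtain ⟨hlen, hbd⟩ := hg i (by simp)
    obtain ⟨ihlen, ihbd⟩ := ih fun j hj => hg j (by simp [hj])
    simp only [List.flatMap_cons, List.length_append, List.length_cons, phgt_append,
      Nat.add_sub_cancel_left, hlen, ihlen, phgt_of_length_le (Nat.le_add_right _ _)]
    refine ⟨by push_cast; ring, fun t => ?_⟩
    by_cases ht : (g i).length ≤ t
    · rw [phgt_of_length_le ht, hlen]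
      have := ihbd (t - (g i).length)
      push_cast
      omega
    · rw [Nat.sub_eq_zero_of_le (by omega), phgt_zero]
      have := hbd t
      push_cast
      omega

def qmid {k : ℕ} (I : Finset (Fin k)) : List Bool :=
  (List.finRange k).flatMap fun l => if l ∈ I then [true] else [true, false, true]

theorem qdirs_eq {k : ℕ} (I : Finset (Fin k)) : qdirs I = true :: (qmid I ++ [true]) :=
  rfl

theorem phgt_qmid {k : ℕ} (I : Finset (Fin k)) :
    phgt (qmid I) (qmid I).length = k ∧ ∀ t, 0 ≤ phgt (qmid I) t ∧ phgt (qmid I) t ≤ k := by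
  obtain ⟨hlen, hbd⟩ := phgt_flatMap (List.finRange k)
    (g := fun l => if l ∈ I then [true] else [true, false, true]) fun l _ => by
      split_ifs
      · exact ⟨rfl, fun t => by rcases t with _ | t <;> simp [phgt]⟩
      · exact ⟨rfl, fun t => by rcases t with _ | _ | _ | t <;> simp [phgt]⟩
  rw [List.length_finRange] at hlen hbd
  exact ⟨hlen, hbd⟩

theorem phgt_true_cons (ds : List Bool) (x : ℕ) : phgt (true :: ds) (x + 1) = phgt ds x + 1 := by
  simp only [phgt, List.take_succ_cons, List.count_cons_self, List.count_cons_of_ne,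
    Nat.cast_add, Nat.cast_one, ne_eq, Bool.true_eq_false, not_false_eq_true]
  ring

theorem phgt_qdirs_length {k : ℕ} (I : Finset (Fin k)) :
    phgt (qdirs I) (qdirs I).length = k + 2 := by
  rw [qdirs_eq, List.length_cons, phgt_true_cons, phgt_append, phgt_of_length_le (by simp),
    (phgt_qmid I).1, List.length_append, Nat.add_sub_cancel_left,
    show phgt [true] [true].length = 1 from rfl]
  ring

theorem phgt_qdirs_of_pos_of_lt {k : ℕ} (I : Finset (Fin k)) {x : ℕ} (h₀ : 0 < x)
    (h₁ : x < (qdirs I).length) :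
    1 ≤ phgt (qdirs I) x ∧ phgt (qdirs I) x ≤ k + 1 := by
  obtain ⟨x, rfl⟩ := Nat.exists_eq_add_of_lt h₀
  rw [qdirs_eq] at h₁ ⊢
  simp only [List.length_cons, List.length_append, List.length_nil] at h₁
  rw [zero_add, phgt_true_cons, phgt_append, Nat.sub_eq_zero_of_le (by omega), phgt_zero]
  have := (phgt_qmid I).2 x
  omega

theorem exists_isPathHom_qdirs {k : ℕ} {I I' : Finset (Fin k)} (h : I ⊆ I') :
    ∃ f, IsPathHom (qdirs I) (qdirs I') f := by
  obtain ⟨F, hF⟩ := IsPathHom.exists_flatMap (List.finRange k)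
    (g := fun l => if l ∈ I then [true] else [true, false, true])
    (g' := fun l => if l ∈ I' then [true] else [true, false, true]) fun l _ => by
      by_cases hl : l ∈ I
      · simp only [hl, h hl, if_true]
        exact ⟨_, IsPathHom.id _⟩
      · by_cases hl' : l ∈ I'
        · simp only [hl, hl', if_true, if_false]
          exact ⟨_, IsPathHom.zigzag⟩
        · simp only [hl, hl', if_false]
          exact ⟨_, IsPathHom.id _⟩
  exact ⟨_, ((IsPathHom.id [true]).append hF).append (IsPathHom.id [true])⟩

theorem IsPathHom.pos_lt_of_qdirs {k : ℕ} {I I' : Finset (Fin k)} {f : ℕ → ℕ}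
    (hf : IsPathHom (qdirs I) (qdirs I') f) {x : ℕ} (h₀ : 0 < x) (h₁ : x < (qdirs I).length) :
    0 < f x ∧ f x < (qdirs I').length := by
  have hx := phgt_qdirs_of_pos_of_lt I h₀ h₁
  have hfx := hf.phgt_map x h₁.le
  refine ⟨Nat.pos_of_ne_zero fun h => ?_, lt_of_not_ge fun h => ?_⟩
  · rw [h, phgt_zero] at hfx
    omega
  · rw [phgt_of_length_le h, phgt_qdirs_length] at hfx
    omega

theorem idxSet_subset_idxSet_comp {A : Type} [DecidableEq A] {k : ℕ} (φ : A → A) (a : A)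
    (r : Fin k → A) : idxSet a r ⊆ idxSet (φ a) (fun i => φ (r i)) := by
  intro l hl
  simp only [idxSet, Finset.mem_filter, Finset.mem_univ, true_and] at hl ⊢
  exact congrArg φ hl

section

variable {A : Type} [DecidableEq A] {k : ℕ} {R : Set (Fin k → A)}

noncomputable def pathMap (φ : A → A) (a : A) (r : Fin k → A) : ℕ → ℕ :=
  (exists_isPathHom_qdirs (idxSet_subset_idxSet_comp φ a r)).choose

theorem isPathHom_pathMap (φ : A → A) (a : A) (r : Fin k → A) :
    IsPathHom (qdirs (idxSet a r)) (qdirs (idxSet (φ a) (fun i => φ (r i)))) (pathMap φ a r) :=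
  (exists_isPathHom_qdirs (idxSet_subset_idxSet_comp φ a r)).choose_spec

noncomputable def DVert.map (φ : A → A) (hφ : ∀ r ∈ R, (fun i => φ (r i)) ∈ R) :
    DVert R → DVert R
  | .base a => .base (φ a)
  | .top r hr => .top (fun i => φ (r i)) (hφ r hr)
  | .inner a r hr j h₀ h₁ => .inner (φ a) (fun i => φ (r i)) (hφ r hr) (pathMap φ a r j)
      ((isPathHom_pathMap φ a r).pos_lt_of_qdirs h₀ h₁).1
      ((isPathHom_pathMap φ a r).pos_lt_of_qdirs h₀ h₁).2

theorem isAt_map (φ : A → A) (hφ : ∀ r ∈ R, (fun i => φ (r i)) ∈ R) {u : DVert R} {a : A}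
    {r : Fin k → A} {x : ℕ} (hu : isAt u a r x) :
    isAt (u.map φ hφ) (φ a) (fun i => φ (r i)) (pathMap φ a r x) := by
  cases u with
  | base a' =>
    obtain ⟨rfl, rfl⟩ := hu
    exact ⟨rfl, (isPathHom_pathMap φ a' r).map_zero⟩
  | top r' hr' =>
    obtain ⟨rfl, rfl⟩ := hu
    exact ⟨rfl, (isPathHom_pathMap φ a r').map_length⟩
  | inner a' r' hr' j h₀ h₁ =>
    obtain ⟨rfl, rfl, rfl⟩ := hu
    exact ⟨rfl, rfl, rfl⟩

theorem dedge_map (φ : A → A) (hφ : ∀ r ∈ R, (fun i => φ (r i)) ∈ R) {u v : DVert R}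
    (h : dedge u v) : dedge (u.map φ hφ) (v.map φ hφ) := by
  obtain ⟨a, r, hr, x, y, hu, hv, hxy⟩ := h
  exact ⟨φ a, _, hφ r hr, _, _, isAt_map φ hφ hu, isAt_map φ hφ hv,
    (isPathHom_pathMap φ a r).map_pedge hxy⟩

end

/-- Every endomorphism `φ` of `(A; R)` extends to an endomorphism `Φ` of `D(A)`:
`Φ` acts as `φ` on `A`, as the coordinatewise application `φ^(k)` on `R`, and maps
each internal vertex of `P_(a,r)` to the corresponding (level-preserving) vertex of
the path `P_(φ(a), φ^(k)(r))` under the unique path homomorphism. -/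
theorem endomorphism_extends_to_D {A : Type} [DecidableEq A] {k : ℕ}
    (R : Set (Fin k → A)) (φ : A → A)
    (hφ : ∀ r ∈ R, (fun i => φ (r i)) ∈ R) :
    ∃ Φ : DVert R → DVert R,
      (∀ u v, dedge u v → dedge (Φ u) (Φ v)) ∧
      (∀ a, Φ (DVert.base a) = DVert.base (φ a)) ∧
      (∀ r hr, Φ (DVert.top r hr) = DVert.top (fun i => φ (r i)) (hφ r hr)) ∧
      (∀ a r hr j h1 h2, ∃ x,
        isAt (Φ (DVert.inner a r hr j h1 h2)) (φ a) (fun i => φ (r i)) x ∧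
        phgt (qdirs (idxSet (φ a) (fun i => φ (r i)))) x =
          phgt (qdirs (idxSet a r)) j) :=
  ⟨DVert.map φ hφ, fun _ _ => dedge_map φ hφ, fun _ => rfl, fun _ _ => rfl,
    fun a r _ j _ h2 => ⟨pathMap φ a r j, ⟨rfl, rfl, rfl⟩,
      (isPathHom_pathMap φ a r).phgt_map j h2.le⟩⟩
end

section
/- Every endomorphism Φ of the digraph D(A) restricts on A ∪ R to a pair (φ, φ^{(k)}) where φ is an endomorphism of A; that is, Φ(A) ⊆ A, Φ(R) ⊆ R, φ = Φ|_A is an endomorphism of A, and Φ(r) = (φ(r₁),...,φ(r_k)) for every r ∈ R. Hence the endomorphisms of A and D(A) are in one-to-one correspondence. -/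
namespace DP

def blk (b : Bool) : List Bool := if b then [true] else [true, false, true]

def mid (f : ℕ → Bool) : ℕ → List Bool
  | 0 => []
  | k+1 => mid f k ++ blk (f k)

def spine (f : ℕ → Bool) (k : ℕ) : List Bool := true :: (mid f k ++ [true])

def Bd (f : ℕ → Bool) (l : ℕ) : ℕ := (mid f l).length + 1

variable {f g : ℕ → Bool} {k l x y : ℕ}

lemma blk_getD_zero (b : Bool) : (blk b).getD 0 false = true := by
  cases b <;> rfl

lemma blk_length (b : Bool) : (blk b).length = if b then 1 else 3 := by
  cases b <;> rfl

lemma Bd_zero : Bd f 0 = 1 := rfl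

lemma Bd_succ : Bd f (l+1) = Bd f l + (blk (f l)).length := by
  simp [Bd, mid, Nat.add_right_comm]

lemma Bd_succ_true (h : f l = true) : Bd f (l+1) = Bd f l + 1 := by
  simp [Bd_succ, blk_length, h]

lemma Bd_succ_false (h : f l = false) : Bd f (l+1) = Bd f l + 3 := by
  simp [Bd_succ, blk_length, h]

lemma Bd_pos : 0 < Bd f l := Nat.succ_pos _

lemma Bd_lt_Bd (h : l < x) : Bd f l < Bd f x := by
  induction x with
  | zero => omega
  | succ n ih =>
    rcases Nat.lt_succ_iff_lt_or_eq.mp h with h' | h'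
    · have := ih h'
      have : (blk (f n)).length = if f n then 1 else 3 := blk_length _
      have h2 := Bd_succ (f := f) (l := n)
      split at this <;> omega
    · subst h'
      have : (blk (f l)).length = if f l then 1 else 3 := blk_length _
      have h2 := Bd_succ (f := f) (l := l)
      split at this <;> omega

lemma Bd_le_Bd (h : l ≤ x) : Bd f l ≤ Bd f x := by
  rcases Nat.lt_or_ge l x with h' | h'
  · exact (Bd_lt_Bd h').le
  · have : l = x := le_antisymm h h'
    exact this ▸ le_refl _

lemma spine_length : (spine f k).length = Bd f k + 1 := by
  simp [spine, Bd]

lemma mid_decomp (h : l < k) : ∃ t, mid f k = mid f l ++ (blk (f l) ++ t) := by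
  induction k with
  | zero => omega
  | succ n ih =>
    rcases Nat.lt_succ_iff_lt_or_eq.mp h with h' | h'
    · obtain ⟨t, ht⟩ := ih h'
      exact ⟨t ++ blk (f n), by simp [mid, ht]⟩
    · subst h'
      exact ⟨[], by simp [mid]⟩

lemma spine_getD_succ : (spine f k).getD (x+1) false = (mid f k ++ [true]).getD x false := rfl

lemma getD_zero : (spine f k).getD 0 false = true := rfl

/-- getD inside block `l` at offset `o`. -/
lemma getD_block (h : l < k) {o : ℕ} (ho : o < (blk (f l)).length) :
    (spine f k).getD (Bd f l + o) false = (blk (f l)).getD o false := by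
  obtain ⟨t, ht⟩ := mid_decomp (f := f) h
  have : Bd f l + o = ((mid f l).length + o) + 1 := by simp [Bd]; omega
  rw [this, spine_getD_succ, ht, List.append_assoc, List.getD_append_right _ _ _ _ (by omega),
    List.append_assoc]
  have : (mid f l).length + o - (mid f l).length = o := by omega
  rw [this, List.getD_append _ _ _ _ (by omega)]

lemma getD_Bd (h : l ≤ k) : (spine f k).getD (Bd f l) false = true := by
  rcases Nat.lt_or_ge l k with h' | h'
  · have := getD_block (f := f) h' (o := 0) (by cases (f l) <;> simp [blk_length])
    rw [Nat.add_zero] at this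
    rw [this, blk_getD_zero]
  · have hk : l = k := le_antisymm h h'
    subst hk
    have : Bd f l = (mid f l).length + 1 := rfl
    rw [this, spine_getD_succ, List.getD_append_right _ _ _ _ (le_refl _)]
    simp

lemma getD_Bd1_false (h : l < k) (hf : f l = false) :
    (spine f k).getD (Bd f l + 1) false = false := by
  have := getD_block (f := f) h (o := 1) (by simp [blk_length, hf])
  rw [this]; simp [blk, hf]

lemma getD_Bd2_false (h : l < k) (hf : f l = false) :
    (spine f k).getD (Bd f l + 2) false = true := by
  have := getD_block (f := f) h (o := 2) (by simp [blk_length, hf])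
  rw [this]; simp [blk, hf]

/-- The position just before a boundary carries a `true`. -/
lemma getD_Bd_pred (h : l ≤ k) : (spine f k).getD ((mid f l).length) false = true := by
  cases l with
  | zero => exact getD_zero
  | succ n =>
    have hn : n < k := h
    have hlen : (mid f (n+1)).length = (mid f n).length + (blk (f n)).length := by
      simp [mid]
    have hb : (blk (f n)).length - 1 < (blk (f n)).length := by
      cases (f n) <;> simp [blk_length]
    have hpos : (mid f (n+1)).length = Bd f n + ((blk (f n)).length - 1) := by
      rw [hlen]; unfold Bd; cases (f n) <;> simp [blk_length] <;> omega
    rw [hpos, getD_block hn hb]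
    cases hfn : (f n) <;> simp [blk, hfn]

/-- Position decoding. -/
lemma decode (hx : x < Bd f k + 1) :
    x = 0 ∨ (∃ l, l ≤ k ∧ x = Bd f l) ∨
      (∃ l, l < k ∧ f l = false ∧ (x = Bd f l + 1 ∨ x = Bd f l + 2)) := by
  induction k with
  | zero =>
    have h0 : Bd f 0 = 1 := rfl
    rw [h0] at hx
    interval_cases x
    · exact Or.inl rfl
    · exact Or.inr (Or.inl ⟨0, le_refl _, rfl⟩)
  | succ n ih =>
    rcases Nat.lt_or_ge x (Bd f n + 1) with h' | h'
    · rcases ih h' with h | ⟨l, hl, he⟩ | ⟨l, hl, hfl, he⟩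
      · exact Or.inl h
      · exact Or.inr (Or.inl ⟨l, by omega, he⟩)
      · exact Or.inr (Or.inr ⟨l, by omega, hfl, he⟩)
    · cases hfn : (f n)
      · have := Bd_succ_false (f := f) hfn
        have : x = Bd f n + 1 ∨ x = Bd f n + 2 ∨ x = Bd f n + 3 := by omega
        rcases this with h | h | h
        · exact Or.inr (Or.inr ⟨n, by omega, hfn, Or.inl h⟩)
        · exact Or.inr (Or.inr ⟨n, by omega, hfn, Or.inr h⟩)
        · exact Or.inr (Or.inl ⟨n+1, le_refl _, by omega⟩)
      · have := Bd_succ_true (f := f) hfn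
        have : x = Bd f n + 1 := by omega
        exact Or.inr (Or.inl ⟨n+1, le_refl _, by omega⟩)

/-- A `false` direction only occurs at `Bd l + 1` in a zigzag block. -/
lemma F_char (hx : x < Bd f k + 1) (hF : (spine f k).getD x false = false) :
    ∃ l, l < k ∧ f l = false ∧ x = Bd f l + 1 := by
  rcases decode (f := f) hx with h | ⟨l, hl, he⟩ | ⟨l, hl, hfl, he | he⟩
  · rw [h, getD_zero] at hF; cases hF
  · rw [he, getD_Bd hl] at hF; cases hF
  · exact ⟨l, hl, hfl, he⟩
  · rw [he, getD_Bd2_false hl hfl] at hF; cases hF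

end DP
namespace DP

variable {f g : ℕ → Bool} {k l x y : ℕ} {ds : List Bool}

lemma phgt_zero : phgt ds 0 = 0 := by simp [phgt]

lemma take_succ_getD (h : x < ds.length) :
    ds.take (x+1) = ds.take x ++ [ds.getD x false] := by
  rw [List.take_succ, List.getElem?_eq_getElem h, List.getD_eq_getElem ds false h]
  rfl

lemma phgt_succ_T (h : x < ds.length) (hT : ds.getD x false = true) :
    phgt ds (x+1) = phgt ds x + 1 := by
  unfold phgt
  rw [take_succ_getD h, hT, List.count_append, List.count_append]
  simp
  ring

lemma phgt_succ_F (h : x < ds.length) (hF : ds.getD x false = false) :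
    phgt ds (x+1) = phgt ds x - 1 := by
  unfold phgt
  rw [take_succ_getD h, hF, List.count_append, List.count_append]
  simp
  ring

lemma pedge_phgt (h : pedge ds x y) : phgt ds y = phgt ds x + 1 := by
  rcases h with ⟨rfl, h1, h2⟩ | ⟨rfl, h1, h2⟩
  · exact phgt_succ_T h1 h2
  · have := phgt_succ_F h1 h2; omega

lemma pedge_bounds (h : pedge ds x y) : x ≤ ds.length ∧ y ≤ ds.length := by
  rcases h with ⟨rfl, h1, _⟩ | ⟨rfl, h1, _⟩ <;> omega

lemma pedge_step (h : pedge ds x y) : y = x + 1 ∨ x = y + 1 := by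
  rcases h with ⟨rfl, _, _⟩ | ⟨rfl, _, _⟩ <;> omega

/- phgt values on the spine -/

lemma Bd_lt_length (h : l ≤ k) : Bd f l < (spine f k).length := by
  rw [spine_length]
  rcases Nat.lt_or_ge l k with h' | h'
  · have := Bd_lt_Bd (f := f) h'; omega
  · have hlk : l = k := le_antisymm h h'
    subst hlk; omega

lemma phgt_Bd (h : l ≤ k) : phgt (spine f k) (Bd f l) = l + 1 := by
  induction l with
  | zero =>
    have h1 : Bd f 0 = 0 + 1 := rfl
    rw [h1, phgt_succ_T (by rw [spine_length]; omega) getD_zero, phgt_zero]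
    simp
  | succ n ih =>
    have hn : n < k := h
    have hnk : n ≤ k := hn.le
    have ihv := ih hnk
    cases hfn : (f n)
    · have hB := Bd_succ_false (f := f) hfn
      have l1 : Bd f n < (spine f k).length := Bd_lt_length hnk
      have l4 : Bd f (n+1) ≤ Bd f k := Bd_le_Bd h
      have l2 : Bd f n + 1 < (spine f k).length := by rw [spine_length]; omega
      have l3 : Bd f n + 2 < (spine f k).length := by rw [spine_length]; omega
      have e1 := phgt_succ_T l1 (getD_Bd hnk)
      have e2 := phgt_succ_F l2 (getD_Bd1_false hn hfn)
      have e3 := phgt_succ_T l3 (getD_Bd2_false hn hfn)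
      have : Bd f (n+1) = (Bd f n + 2) + 1 := by omega
      rw [this, e3]
      have : Bd f n + 2 = (Bd f n + 1) + 1 := by omega
      rw [this, e2]
      have : Bd f n + 1 = Bd f n + 1 := rfl
      rw [e1, ihv]
      push_cast
      ring
    · have hB := Bd_succ_true (f := f) hfn
      rw [hB, phgt_succ_T (Bd_lt_length hnk) (getD_Bd hnk), ihv]
      push_cast
      ring

lemma phgt_Bd1_false (h : l < k) (hf : f l = false) :
    phgt (spine f k) (Bd f l + 1) = l + 2 := by
  rw [phgt_succ_T (Bd_lt_length h.le) (getD_Bd h.le), phgt_Bd h.le]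
  ring

lemma phgt_Bd2_false (h : l < k) (hf : f l = false) :
    phgt (spine f k) (Bd f l + 2) = l + 1 := by
  have l2 : Bd f l + 1 < (spine f k).length := by
    rw [spine_length]
    have h4 : Bd f (l+1) ≤ Bd f k := Bd_le_Bd h
    have := Bd_succ_false (f := f) hf
    omega
  have : Bd f l + 2 = (Bd f l + 1) + 1 := rfl
  rw [this, phgt_succ_F l2 (getD_Bd1_false h hf), phgt_Bd1_false h hf]
  ring

lemma phgt_len : phgt (spine f k) (Bd f k + 1) = k + 2 := by
  rw [phgt_succ_T (Bd_lt_length (le_refl _)) (getD_Bd (le_refl _)), phgt_Bd (le_refl _)]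
  ring

lemma phgt_interior (h0 : 0 < x) (hx : x < Bd f k + 1) :
    1 ≤ phgt (spine f k) x ∧ phgt (spine f k) x ≤ k + 1 := by
  rcases decode (f := f) hx with h | ⟨l, hl, he⟩ | ⟨l, hl, hfl, he | he⟩
  · omega
  · subst he
    rw [phgt_Bd hl]
    constructor <;> [omega; (push_cast; omega)]
  · subst he
    rw [phgt_Bd1_false hl hfl]
    constructor <;> [omega; (push_cast; omega)]
  · subst he
    rw [phgt_Bd2_false hl hfl]
    constructor <;> [omega; (push_cast; omega)]

/-- qdirs equals a spine. -/
def fI {k : ℕ} (I : Finset (Fin k)) : ℕ → Bool :=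
  fun l => if h : l < k then decide ((⟨l, h⟩ : Fin k) ∈ I) else true

lemma mem_iff_fI {k : ℕ} {I : Finset (Fin k)} {i : Fin k} : i ∈ I ↔ fI I i.val = true := by
  simp [fI, i.isLt]

lemma flatMap_finRange {k : ℕ} (gg : Fin k → List Bool) (f : ℕ → Bool)
    (hg : ∀ i : Fin k, gg i = blk (f i.val)) :
    (List.finRange k).flatMap gg = mid f k := by
  induction k with
  | zero => simp [mid]
  | succ n ih =>
    rw [List.finRange_succ_last, List.flatMap_append, List.flatMap_map]
    have h1 : (List.finRange n).flatMap (gg ∘ Fin.castSucc) = mid f n := by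
      apply ih
      intro i
      have := hg (Fin.castSucc i)
      simpa using this
    rw [show ((List.finRange n).flatMap fun a => gg a.castSucc) = mid f n from h1]
    have h2 : gg (Fin.last n) = blk (f n) := by
      have := hg (Fin.last n)
      simpa using this
    simp [mid, h2]

lemma qdirs_eq_spine {k : ℕ} (I : Finset (Fin k)) : qdirs I = spine (fI I) k := by
  unfold qdirs spine
  rw [flatMap_finRange _ (fI I) ?_]
  · simp
  · intro i
    by_cases h : i ∈ I
    · have : fI I i.val = true := mem_iff_fI.mp h
      simp [blk, this, h]
    · have : fI I i.val = false := by
        rcases Bool.eq_false_or_eq_true (fI I i.val) with hb | hb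
        · exact absurd (mem_iff_fI.mpr hb) h
        · exact hb
      simp [blk, this, h]

/-- Crossing lemma. -/
lemma crossing (p : ℕ → ℕ) (c : ℕ) :
    ∀ n, p 0 ≤ c → c < p n → (∀ x < n, p (x+1) = p x + 1 ∨ p x = p (x+1) + 1) →
      ∃ x < n, p x = c ∧ p (x+1) = c + 1 := by
  intro n
  induction n with
  | zero => intro h1 h2 _; omega
  | succ m ih =>
    intro h1 h2 hs
    rcases Nat.lt_or_ge c (p m) with h' | h'
    · obtain ⟨x, hx, he⟩ := ih h1 h' (fun x hx => hs x (by omega))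
      exact ⟨x, by omega, he⟩
    · have := hs m (by omega)
      exact ⟨m, by omega, by omega, by omega⟩

end DP
namespace DP

variable {f g : ℕ → Bool} {k l m x y : ℕ}

/-- The possible joint states of a position `x` in `Q_I` and the position `y` of
its image in `Q_J` under an endpoint-respecting homomorphism. -/
def GoodSt (f g : ℕ → Bool) (k x y : ℕ) : Prop :=
  (x = 0 ∧ y = 0) ∨
  (∃ l, l ≤ k ∧ x = Bd f l ∧ y = Bd g l) ∨
  (∃ l, l < k ∧ f l = false ∧ x = Bd f l + 1 ∧ y = Bd g l + 1) ∨
  (∃ l, l < k ∧ f l = false ∧ x = Bd f l + 2 ∧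
    y = (if g l then Bd g l else Bd g l + 2)) ∨
  (x = Bd f k + 1 ∧ y = Bd g k + 1)

/-- Validity of a position map as a homomorphism of oriented paths. -/
def PValid (f g : ℕ → Bool) (k : ℕ) (p : ℕ → ℕ) : Prop :=
  ∀ x < Bd f k + 1,
    ((spine f k).getD x false = true → pedge (spine g k) (p x) (p (x+1))) ∧
    ((spine f k).getD x false = false → pedge (spine g k) (p (x+1)) (p x))

lemma Bd_out (hl : l < k) (hfl : f l = false) (hm : m ≤ k) :
    Bd f m ≤ Bd f l ∨ Bd f l + 3 ≤ Bd f m := by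
  rcases le_or_gt m l with h | h
  · exact Or.inl (Bd_le_Bd h)
  · right
    have h1 := Bd_succ_false (f := f) hfl
    have h2 : Bd f (l+1) ≤ Bd f m := Bd_le_Bd h
    omega

lemma Bd_inj (h1 : l ≤ k) (h2 : m ≤ k) (h : Bd f l = Bd f m) : l = m := by
  rcases Nat.lt_trichotomy l m with h' | h' | h'
  · have := Bd_lt_Bd (f := f) h'; omega
  · exact h'
  · have := Bd_lt_Bd (f := f) h'; omega

lemma pedge_T {ds : List Bool} (h : x < ds.length) (hT : ds.getD x false = true) :
    pedge ds x (x+1) := Or.inl ⟨rfl, h, hT⟩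

lemma pedge_F {ds : List Bool} (h : x < ds.length) (hF : ds.getD x false = false) :
    pedge ds (x+1) x := Or.inr ⟨rfl, h, hF⟩

/-- The only edge leaving a boundary position goes forward. -/
lemma pedge_from_Bd (hl : l ≤ k) (h : pedge (spine g k) (Bd g l) y) : y = Bd g l + 1 := by
  rcases h with ⟨rfl, _, _⟩ | ⟨he, hlt, hF⟩
  · rfl
  · exfalso
    have hy : y = (mid g l).length := by
      have : Bd g l = (mid g l).length + 1 := rfl
      omega
    rw [hy, getD_Bd_pred hl] at hF
    cases hF

/-- A zigzag middle is a sink: it has no outgoing edge. -/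
lemma sink_no_out (hl : l < k) (hgl : g l = false) (h : pedge (spine g k) (Bd g l + 1) y) :
    False := by
  rcases h with ⟨_, _, hT⟩ | ⟨he, _, hF⟩
  · rw [getD_Bd1_false hl hgl] at hT; cases hT
  · have hy : y = Bd g l := by omega
    rw [hy, getD_Bd hl.le] at hF
    cases hF

lemma interior_lt_false (hl : l < k) (hfl : f l = false) : Bd f l + 3 ≤ Bd f k := by
  have h1 := Bd_succ_false (f := f) hfl
  have h2 : Bd f (l+1) ≤ Bd f k := Bd_le_Bd hl
  omega

/-- Master lemma: any valid position map starting at `0` passes only through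
the canonical states, provided `f ⊆ g`. -/
lemma master (hfg : ∀ l, l < k → f l = true → g l = true) (p : ℕ → ℕ)
    (hp0 : p 0 = 0) (hv : PValid f g k p) :
    ∀ x, x ≤ Bd f k + 1 → GoodSt f g k x (p x) := by
  intro x
  induction x with
  | zero => intro _; exact Or.inl ⟨rfl, hp0⟩
  | succ n ih =>
    intro hn1
    have hn : n < Bd f k + 1 := by omega
    rcases ih (by omega) with ⟨hx, hy⟩ | ⟨l, hl, hx, hy⟩ | ⟨l, hl, hfl, hx, hy⟩ |
      ⟨l, hl, hfl, hx, hy⟩ | ⟨hx, hy⟩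
    · -- state 1
      have hped := (hv n hn).1 (by rw [hx]; exact getD_zero)
      rw [hy] at hped
      have h1 : p (n+1) = 1 := by
        rcases hped with ⟨h, _, _⟩ | ⟨h, _, _⟩ <;> omega
      have hB0 : Bd f 0 = 1 := rfl
      have hB0g : Bd g 0 = 1 := rfl
      exact Or.inr (Or.inl ⟨0, Nat.zero_le _, by omega, by omega⟩)
    · -- state 2
      have hped := (hv n hn).1 (by rw [hx]; exact getD_Bd hl)
      rw [hy] at hped
      have h1 : p (n+1) = Bd g l + 1 := pedge_from_Bd hl hped
      rcases Nat.lt_or_ge l k with hlk | hlk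
      · cases hfl : (f l)
        · exact Or.inr (Or.inr (Or.inl ⟨l, hlk, hfl, by omega, by omega⟩))
        · have hgl := hfg l hlk hfl
          have e1 := Bd_succ_true (f := f) hfl
          have e2 := Bd_succ_true (f := g) hgl
          exact Or.inr (Or.inl ⟨l+1, hlk, by omega, by omega⟩)
      · have hlk2 : l = k := le_antisymm hl hlk
        subst hlk2
        exact Or.inr (Or.inr (Or.inr (Or.inr ⟨by omega, by omega⟩)))
    · -- state 3
      have hped := (hv n hn).2 (by rw [hx]; exact getD_Bd1_false hl hfl)
      rw [hy] at hped
      have hintf := interior_lt_false (f := f) hl hfl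
      cases hgl : (g l)
      · -- g-side zigzag: forward forced; refute the fold
        have hintg := interior_lt_false (f := g) hl hgl
        have h1 : p (n+1) = Bd g l + 2 := by
          rcases hped with ⟨he, hlt, hT⟩ | ⟨he, hlt, hF⟩
          · exfalso
            have hpx1 : p (n+1) = Bd g l := by omega
            have hs1 := (hv (n+1) (by omega)).1
              (by rw [show n+1 = Bd f l + 2 by omega]; exact getD_Bd2_false hl hfl)
            rw [hpx1] at hs1
            have h2 : p (n+1+1) = Bd g l + 1 := pedge_from_Bd hl.le hs1
            have hs2 := (hv (n+1+1) (by omega)).1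
              (by rw [show n+1+1 = Bd f (l+1) by rw [Bd_succ_false hfl]; omega]
                  exact getD_Bd hl)
            rw [h2] at hs2
            exact sink_no_out hl hgl hs2
          · omega
        refine Or.inr (Or.inr (Or.inr (Or.inl ⟨l, hl, hfl, by omega, ?_⟩)))
        rw [h1, if_neg (show ¬ (g l = true) by simp [hgl])]
      · -- g-side single: fold forced
        have h1 : p (n+1) = Bd g l := by
          rcases hped with ⟨he, hlt, hT⟩ | ⟨he, hlt, hF⟩
          · omega
          · exfalso
            have hB : Bd g l + 1 = Bd g (l+1) := (Bd_succ_true hgl).symm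
            rw [hB, getD_Bd hl] at hF
            cases hF
        refine Or.inr (Or.inr (Or.inr (Or.inl ⟨l, hl, hfl, by omega, ?_⟩)))
        rw [h1, if_pos hgl]
    · -- state 4
      have hped := (hv n hn).1 (by rw [hx]; exact getD_Bd2_false hl hfl)
      have hintf := interior_lt_false (f := f) hl hfl
      have hBf : Bd f (l+1) = Bd f l + 3 := Bd_succ_false hfl
      cases hgl : (g l)
      · have hy' : p n = Bd g l + 2 := by
          rw [hy, if_neg (show ¬ (g l = true) by simp [hgl])]
        have hintg := interior_lt_false (f := g) hl hgl
        have hBg : Bd g (l+1) = Bd g l + 3 := Bd_succ_false hgl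
        rw [hy'] at hped
        have h1 : p (n+1) = Bd g l + 3 := by
          rcases hped with ⟨he, hlt, hT⟩ | ⟨he, hlt, hF⟩
          · omega
          · exfalso
            have hpx1 : p (n+1) = Bd g l + 1 := by omega
            have hs2 := (hv (n+1) (by omega)).1
              (by rw [show n+1 = Bd f (l+1) by omega]; exact getD_Bd hl)
            rw [hpx1] at hs2
            exact sink_no_out hl hgl hs2
        exact Or.inr (Or.inl ⟨l+1, hl, by omega, by omega⟩)
      · have hy' : p n = Bd g l := by rw [hy, if_pos hgl]
        have hBg : Bd g (l+1) = Bd g l + 1 := Bd_succ_true hgl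
        rw [hy'] at hped
        have h1 : p (n+1) = Bd g l + 1 := pedge_from_Bd hl.le hped
        exact Or.inr (Or.inl ⟨l+1, hl, by omega, by omega⟩)
    · -- state 5 : no further step possible
      exfalso; omega

/-- Determinism of states. -/
lemma GoodSt_det (h1 : GoodSt f g k x y) (h2 : GoodSt f g k x m) : y = m := by
  rcases h1 with ⟨hx, hy⟩ | ⟨l, hl, hx, hy⟩ | ⟨l, hl, hfl, hx, hy⟩ |
      ⟨l, hl, hfl, hx, hy⟩ | ⟨hx, hy⟩ <;>
    rcases h2 with ⟨hx', hy'⟩ | ⟨l', hl', hx', hy'⟩ | ⟨l', hl', hfl', hx', hy'⟩ |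
      ⟨l', hl', hfl', hx', hy'⟩ | ⟨hx', hy'⟩
  · rw [hy, hy']
  · exfalso; have := Bd_pos (f := f) (l := l'); omega
  · exfalso; have := Bd_pos (f := f) (l := l'); omega
  · exfalso; have := Bd_pos (f := f) (l := l'); omega
  · exfalso; have := Bd_pos (f := f) (l := k); omega
  · exfalso; have := Bd_pos (f := f) (l := l); omega
  · have : l = l' := Bd_inj (f := f) hl hl' (by omega)
    rw [hy, hy', this]
  · exfalso; rcases Bd_out hl' hfl' hl with h | h <;> omega
  · exfalso; rcases Bd_out hl' hfl' hl with h | h <;> omega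
  · exfalso; have := Bd_le_Bd (f := f) hl; omega
  · exfalso; have := Bd_pos (f := f) (l := l); omega
  · exfalso; rcases Bd_out hl hfl hl' with h | h <;> omega
  · have : l = l' := Bd_inj (f := f) hl.le hl'.le (by omega)
    rw [hy, hy', this]
  · exfalso; rcases Bd_out hl' hfl' hl.le with h | h <;> omega
  · exfalso
    have : l = k := Bd_inj (f := f) hl.le (le_refl k) (by omega)
    omega
  · exfalso; have := Bd_pos (f := f) (l := l); omega
  · exfalso; rcases Bd_out hl hfl hl' with h | h <;> omega
  · exfalso; rcases Bd_out hl hfl hl'.le with h | h <;> omega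
  · have : l = l' := Bd_inj (f := f) hl.le hl'.le (by omega)
    rw [hy, hy', this]
  · exfalso; rcases Bd_out hl hfl (le_refl k) with h | h <;> omega
  · exfalso; have := Bd_pos (f := f) (l := k); omega
  · exfalso; have := Bd_le_Bd (f := f) hl'; omega
  · exfalso
    have : l' = k := Bd_inj (f := f) hl'.le (le_refl k) (by omega)
    omega
  · exfalso; rcases Bd_out hl' hfl' (le_refl k) with h | h <;> omega
  · rw [hy, hy']

lemma GoodSt_end (h : GoodSt f g k (Bd f k + 1) y) : y = Bd g k + 1 := by
  rcases h with ⟨hx, hy⟩ | ⟨l, hl, hx, hy⟩ | ⟨l, hl, hfl, hx, hy⟩ |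
      ⟨l, hl, hfl, hx, hy⟩ | ⟨hx, hy⟩
  · exfalso; have := Bd_pos (f := f) (l := k); omega
  · exfalso; have := Bd_le_Bd (f := f) hl; omega
  · exfalso
    have : l = k := Bd_inj (f := f) hl.le (le_refl k) (by omega)
    omega
  · exfalso; rcases Bd_out hl hfl (le_refl k) with h | h <;> omega
  · exact hy

lemma GoodSt_interior (h : GoodSt f g k x y) (h0 : 0 < x) (hx : x < Bd f k + 1) :
    0 < y ∧ y < Bd g k + 1 := by
  rcases h with ⟨hx', hy⟩ | ⟨l, hl, hx', hy⟩ | ⟨l, hl, hfl, hx', hy⟩ |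
      ⟨l, hl, hfl, hx', hy⟩ | ⟨hx', hy⟩
  · omega
  · have h1 : Bd g l ≤ Bd g k := Bd_le_Bd hl
    have := Bd_pos (f := g) (l := l)
    omega
  · have h1 : Bd g (l+1) ≤ Bd g k := Bd_le_Bd hl
    have h2 := Bd_succ (f := g) (l := l)
    have h3 : 1 ≤ (blk (g l)).length := by cases (g l) <;> simp [blk]
    omega
  · have h1 : Bd g (l+1) ≤ Bd g k := Bd_le_Bd hl
    have h0g := Bd_pos (f := g) (l := l)
    cases hgl : (g l)
    · have hy' : y = Bd g l + 2 := by
        rw [hy, if_neg (show ¬ (g l = true) by simp [hgl])]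
      have h2 := Bd_succ_false (f := g) hgl
      omega
    · have hy' : y = Bd g l := by rw [hy, if_pos hgl]
      have h2 := Bd_succ_true (f := g) hgl
      omega
  · exfalso; omega

/-- The canonical (greedy) position map. -/
def gm (f g : ℕ → Bool) (k : ℕ) : ℕ → ℕ
  | 0 => 0
  | x+1 =>
      if (spine f k).getD x false = true then gm f g k x + 1
      else if (spine g k).getD (gm f g k x) false = false then gm f g k x + 1
      else gm f g k x - 1

lemma gm_step (x : ℕ) (hx : x < Bd f k + 1) (hG : GoodSt f g k x (gm f g k x))
    (hfg : ∀ l, l < k → f l = true → g l = true) :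
    GoodSt f g k (x+1) (gm f g k (x+1)) ∧
      ((spine f k).getD x false = true → pedge (spine g k) (gm f g k x) (gm f g k (x+1))) ∧
      ((spine f k).getD x false = false → pedge (spine g k) (gm f g k (x+1)) (gm f g k x)) := by
  rcases hG with ⟨hx', hy⟩ | ⟨l, hl, hx', hy⟩ | ⟨l, hl, hfl, hx', hy⟩ |
      ⟨l, hl, hfl, hx', hy⟩ | ⟨hx', hy⟩
  · -- state 1
    subst hx'
    have hT := getD_zero (f := f) (k := k)
    have hgm1 : gm f g k (0+1) = 1 := by rw [gm, if_pos hT, hy]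
    have hB0 : Bd f 0 = 1 := rfl
    have hB0g : Bd g 0 = 1 := rfl
    refine ⟨Or.inr (Or.inl ⟨0, Nat.zero_le _, by omega, by omega⟩), ?_, ?_⟩
    · intro _
      rw [hy, hgm1]
      exact pedge_T (by rw [spine_length]; have := Bd_pos (f := g) (l := k); omega)
        (getD_zero (f := g))
    · intro hF
      exact absurd hF (by rw [hT]; simp)
  · -- state 2
    have hT : (spine f k).getD x false = true := by rw [hx']; exact getD_Bd hl
    have hgm1 : gm f g k (x+1) = Bd g l + 1 := by rw [gm, if_pos hT, hy]
    have hped : pedge (spine g k) (gm f g k x) (gm f g k (x+1)) := by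
      rw [hy, hgm1]
      exact pedge_T (Bd_lt_length hl) (getD_Bd hl)
    refine ⟨?_, fun _ => hped, fun hF => absurd hF (by rw [hT]; simp)⟩
    rcases Nat.lt_or_ge l k with hlk | hlk
    · cases hfl : (f l)
      · exact Or.inr (Or.inr (Or.inl ⟨l, hlk, hfl, by omega, by omega⟩))
      · have hgl := hfg l hlk hfl
        have e1 := Bd_succ_true (f := f) hfl
        have e2 := Bd_succ_true (f := g) hgl
        exact Or.inr (Or.inl ⟨l+1, hlk, by omega, by omega⟩)
    · have hlk2 : l = k := le_antisymm hl hlk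
      subst hlk2
      exact Or.inr (Or.inr (Or.inr (Or.inr ⟨by omega, by omega⟩)))
  · -- state 3
    have hF : (spine f k).getD x false = false := by rw [hx']; exact getD_Bd1_false hl hfl
    have hnT : ¬ ((spine f k).getD x false = true) := by rw [hF]; simp
    cases hgl : (g l)
    · have hgF := getD_Bd1_false (f := g) hl hgl
      have hintg := interior_lt_false (f := g) hl hgl
      have hgm1 : gm f g k (x+1) = Bd g l + 2 := by
        rw [gm, if_neg hnT, hy, if_pos hgF]
      refine ⟨Or.inr (Or.inr (Or.inr (Or.inl ⟨l, hl, hfl, by omega,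
        by rw [hgm1, if_neg (show ¬ (g l = true) by simp [hgl])]⟩))),
        fun hT => absurd hT hnT, fun _ => ?_⟩
      rw [hy, hgm1]
      exact pedge_F (by rw [spine_length]; omega) hgF
    · have hB : Bd g l + 1 = Bd g (l+1) := (Bd_succ_true hgl).symm
      have hgT : (spine g k).getD (Bd g l + 1) false = true := by
        rw [hB]; exact getD_Bd hl
      have hgnF : ¬ ((spine g k).getD (gm f g k x) false = false) := by
        rw [hy, hgT]; simp
      have hgm1 : gm f g k (x+1) = Bd g l := by
        rw [gm, if_neg hnT, if_neg hgnF, hy]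
        omega
      refine ⟨Or.inr (Or.inr (Or.inr (Or.inl ⟨l, hl, hfl, by omega,
        by rw [hgm1, if_pos hgl]⟩))),
        fun hT => absurd hT hnT, fun _ => ?_⟩
      rw [hy, hgm1]
      exact pedge_T (Bd_lt_length hl.le) (getD_Bd hl.le)
  · -- state 4
    have hT : (spine f k).getD x false = true := by rw [hx']; exact getD_Bd2_false hl hfl
    have hBf : Bd f (l+1) = Bd f l + 3 := Bd_succ_false hfl
    cases hgl : (g l)
    · have hy' : gm f g k x = Bd g l + 2 := by
        rw [hy, if_neg (show ¬ (g l = true) by simp [hgl])]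
      have hintg := interior_lt_false (f := g) hl hgl
      have hBg : Bd g (l+1) = Bd g l + 3 := Bd_succ_false hgl
      have hgm1 : gm f g k (x+1) = Bd g l + 3 := by rw [gm, if_pos hT, hy']
      refine ⟨Or.inr (Or.inl ⟨l+1, hl, by omega, by omega⟩), fun _ => ?_,
        fun hFc => absurd hFc (by rw [hT]; simp)⟩
      rw [hy', hgm1]
      exact pedge_T (by rw [spine_length]; omega) (getD_Bd2_false hl hgl)
    · have hy' : gm f g k x = Bd g l := by rw [hy, if_pos hgl]
      have hBg : Bd g (l+1) = Bd g l + 1 := Bd_succ_true hgl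
      have hgm1 : gm f g k (x+1) = Bd g l + 1 := by rw [gm, if_pos hT, hy']
      refine ⟨Or.inr (Or.inl ⟨l+1, hl, by omega, by omega⟩), fun _ => ?_,
        fun hFc => absurd hFc (by rw [hT]; simp)⟩
      rw [hy', hgm1]
      exact pedge_T (Bd_lt_length hl.le) (getD_Bd hl.le)
  · -- state 5
    exfalso; omega

lemma gm_good (hfg : ∀ l, l < k → f l = true → g l = true) :
    ∀ x, x ≤ Bd f k + 1 → GoodSt f g k x (gm f g k x) := by
  intro x
  induction x with
  | zero => intro _; exact Or.inl ⟨rfl, rfl⟩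
  | succ n ih =>
    intro hn
    exact (gm_step n (by omega) (ih (by omega)) hfg).1

lemma gm_valid (hfg : ∀ l, l < k → f l = true → g l = true) : PValid f g k (gm f g k) := by
  intro x hx
  exact (gm_step x hx (gm_good hfg x hx.le) hfg).2

lemma gm_end (hfg : ∀ l, l < k → f l = true → g l = true) :
    gm f g k (Bd f k + 1) = Bd g k + 1 :=
  GoodSt_end (gm_good hfg _ (le_refl _))

/-- Uniqueness: any valid position map starting at 0 agrees with the canonical one. -/
lemma walk_unique (hfg : ∀ l, l < k → f l = true → g l = true) (p : ℕ → ℕ)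
    (hp0 : p 0 = 0) (hv : PValid f g k p) :
    ∀ x, x ≤ Bd f k + 1 → p x = gm f g k x := by
  intro x hx
  exact GoodSt_det (master hfg p hp0 hv x hx) (gm_good hfg x hx)

/-- Heights are preserved by valid position maps. -/
lemma walk_phgt (p : ℕ → ℕ) (hp0 : p 0 = 0) (hv : PValid f g k p) :
    ∀ x, x ≤ Bd f k + 1 → phgt (spine g k) (p x) = phgt (spine f k) x := by
  intro x
  induction x with
  | zero => intro _; rw [hp0, phgt_zero, phgt_zero]
  | succ n ih =>
    intro hn
    have hlen : n < (spine f k).length := by rw [spine_length]; omega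
    have ihv := ih (by omega)
    cases hd : (spine f k).getD n false
    · have hped := (hv n (by omega)).2 hd
      have h1 := pedge_phgt hped
      have h2 := phgt_succ_F hlen hd
      omega
    · have hped := (hv n (by omega)).1 hd
      have h1 := pedge_phgt hped
      have h2 := phgt_succ_T hlen hd
      omega

/-- A valid endpoint-to-endpoint position map certifies `f ⊆ g`. -/
lemma walk_subset (p : ℕ → ℕ) (hp0 : p 0 = 0)
    (hpL : p (Bd f k + 1) = Bd g k + 1) (hv : PValid f g k p) :
    ∀ l, l < k → f l = true → g l = true := by
  intro l hl hfT
  cases hgl : (g l)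
  · exfalso
    have hint := interior_lt_false (f := g) hl hgl
    have hsteps : ∀ x < Bd f k + 1, p (x+1) = p x + 1 ∨ p x = p (x+1) + 1 := by
      intro x hx
      cases hd : (spine f k).getD x false
      · rcases pedge_step ((hv x hx).2 hd) with h | h <;> omega
      · rcases pedge_step ((hv x hx).1 hd) with h | h <;> omega
    obtain ⟨x, hxlt, hpx, hpx1⟩ := crossing p (Bd g l + 1) (Bd f k + 1)
      (by omega) (by omega) hsteps
    have hdF : (spine f k).getD x false = false := by
      cases hd : (spine f k).getD x false
      · rfl
      · exfalso
        have hped := (hv x hxlt).1 hd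
        rw [hpx, hpx1] at hped
        rcases hped with ⟨_, _, hT⟩ | ⟨he, _, _⟩
        · rw [getD_Bd1_false hl hgl] at hT; cases hT
        · omega
    obtain ⟨l', hl', hfl', hxe⟩ := F_char hxlt hdF
    have hh := walk_phgt p hp0 hv x hxlt.le
    rw [hpx, hxe, phgt_Bd1_false hl hgl, phgt_Bd1_false hl' hfl'] at hh
    have hle : l' = l := by omega
    rw [← hle, hfl'] at hfT
    cases hfT
  · rfl

end DP
namespace DP

variable {A : Type} [DecidableEq A] {k : ℕ} {R : Set (Fin k → A)}

/-- Total flag function of the index set of `(a, r)`. -/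
def fF {A : Type} [DecidableEq A] {k : ℕ} (a : A) (r : Fin k → A) : ℕ → Bool :=
  fI (idxSet a r)

lemma qdirs_idx (a : A) (r : Fin k → A) : qdirs (idxSet a r) = spine (fF a r) k :=
  qdirs_eq_spine _

lemma fF_iff {a : A} {r : Fin k → A} {i : Fin k} : fF a r i.val = true ↔ a = r i := by
  rw [fF, ← mem_iff_fI]
  simp [idxSet]

lemma plen_eq (a : A) (r : Fin k → A) : plen a r = Bd (fF a r) k + 1 := by
  rw [plen, qdirs_idx, spine_length]

lemma plen_pos (a : A) (r : Fin k → A) : 2 ≤ plen a r := by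
  rw [plen_eq]
  have := Bd_pos (f := fF a r) (l := k)
  omega

/-- Integer-valued level. -/
def lvl' {A : Type} [DecidableEq A] {k : ℕ} {R : Set (Fin k → A)} : DVert R → ℤ
  | .base _ => 0
  | .top _ _ => (k : ℤ) + 2
  | .inner a r _ j _ _ => phgt (qdirs (idxSet a r)) j

lemma isAt_lvl {v : DVert R} {a r x} (h : isAt v a r x) :
    lvl' v = phgt (qdirs (idxSet a r)) x := by
  cases v with
  | base b =>
    obtain ⟨hb, hx⟩ := h
    rw [hx]
    simp [lvl', phgt_zero]
  | top r' hr' =>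
    obtain ⟨hrr, hx⟩ := h
    rw [hx, plen_eq, qdirs_idx]
    simp [lvl', phgt_len]
  | inner a' r' hr' j j1 j2 =>
    obtain ⟨ha, hrr, hx⟩ := h
    subst ha; subst hrr; subst hx
    rfl

lemma lvl'_nonneg (v : DVert R) : 0 ≤ lvl' v := by
  cases v with
  | base b => simp [lvl']
  | top r hr => simp [lvl']; omega
  | inner a r hr j j1 j2 =>
    have j2' : j < Bd (fF a r) k + 1 := by rw [← plen_eq]; exact j2
    have := (phgt_interior (f := fF a r) j1 j2').1
    simp only [lvl', qdirs_idx]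
    omega

lemma lvl'_le (v : DVert R) : lvl' v ≤ (k : ℤ) + 2 := by
  cases v with
  | base b => simp [lvl']; omega
  | top r hr => simp [lvl']
  | inner a r hr j j1 j2 =>
    have j2' : j < Bd (fF a r) k + 1 := by rw [← plen_eq]; exact j2
    have := (phgt_interior (f := fF a r) j1 j2').2
    simp only [lvl', qdirs_idx]
    omega

lemma lvl'_base_eq (v : DVert R) (h : lvl' v = 0) : ∃ b, v = DVert.base b := by
  cases v with
  | base b => exact ⟨b, rfl⟩
  | top r hr => exfalso; simp [lvl'] at h; omega
  | inner a r hr j j1 j2 =>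
    exfalso
    have j2' : j < Bd (fF a r) k + 1 := by rw [← plen_eq]; exact j2
    have := (phgt_interior (f := fF a r) j1 j2').1
    simp only [lvl', qdirs_idx] at h
    omega

lemma lvl'_top_eq (v : DVert R) (h : lvl' v = (k : ℤ) + 2) :
    ∃ s hs, v = DVert.top s hs := by
  cases v with
  | base b => exfalso; simp [lvl'] at h; omega
  | top r hr => exact ⟨r, hr, rfl⟩
  | inner a r hr j j1 j2 =>
    exfalso
    have j2' : j < Bd (fF a r) k + 1 := by rw [← plen_eq]; exact j2
    have := (phgt_interior (f := fF a r) j1 j2').2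
    simp only [lvl', qdirs_idx] at h
    omega

lemma lvl'_inner_eq (v : DVert R) (h1 : 0 < lvl' v) (h2 : lvl' v < (k : ℤ) + 2) :
    ∃ a r hr j j1 j2, v = DVert.inner a r hr j j1 j2 := by
  cases v with
  | base b => exfalso; simp [lvl'] at h1
  | top r hr => exfalso; simp [lvl'] at h2
  | inner a r hr j j1 j2 => exact ⟨a, r, hr, j, j1, j2, rfl⟩

lemma dedge_lvl {u v : DVert R} (h : dedge u v) : lvl' v = lvl' u + 1 := by
  obtain ⟨a, r, hr, x, y, hx, hy, hpe⟩ := h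
  rw [isAt_lvl hx, isAt_lvl hy]
  exact pedge_phgt hpe

/-- The canonical walk along `P_(a,r)`. -/
def pathVert (a : A) (r : Fin k → A) (hr : r ∈ R) (x : ℕ) : DVert R :=
  if h0 : x = 0 then .base a
  else if hl : x < plen a r then .inner a r hr x (Nat.pos_of_ne_zero h0) hl
  else .top r hr

lemma pathVert_zero {a : A} {r} {hr : r ∈ R} : pathVert a r hr 0 = .base a := rfl

lemma pathVert_top {a : A} {r} {hr : r ∈ R} {x} (h : plen a r ≤ x) :
    pathVert a r hr x = .top r hr := by
  have h0 : x ≠ 0 := by have := plen_pos a r; omega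
  rw [pathVert, dif_neg h0, dif_neg (by omega)]

lemma pathVert_inner {a : A} {r} {hr : r ∈ R} {x} (h0 : 0 < x) (hx : x < plen a r) :
    pathVert a r hr x = .inner a r hr x h0 hx := by
  rw [pathVert, dif_neg (by omega), dif_pos hx]

lemma isAt_pathVert {a : A} {r} {hr : r ∈ R} {x} (hx : x ≤ plen a r) :
    isAt (pathVert a r hr x) a r x := by
  rcases Nat.eq_zero_or_pos x with rfl | h0
  · exact ⟨rfl, rfl⟩
  · rcases Nat.lt_or_ge x (plen a r) with hlt | hge
    · rw [pathVert_inner h0 hlt]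
      exact ⟨rfl, rfl, rfl⟩
    · rw [pathVert_top hge]
      exact ⟨rfl, le_antisymm hx hge⟩

lemma isAt_fun {v : DVert R} {a r x y} (h1 : isAt v a r x) (h2 : isAt v a r y) :
    x = y := by
  cases v with
  | base b => rw [h1.2, h2.2]
  | top r' hr' => rw [h1.2, h2.2]
  | inner a' r' hr' j j1 j2 => rw [h1.2.2, h2.2.2]

lemma dedge_pathVert {a : A} {r} (hr : r ∈ R) {x y}
    (hpe : pedge (qdirs (idxSet a r)) x y) :
    dedge (pathVert a r hr x) (pathVert a r hr y) := by
  have hb := pedge_bounds hpe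
  exact ⟨a, r, hr, x, y, isAt_pathVert hb.1, isAt_pathVert hb.2, hpe⟩

lemma dedge_inner_inner {a1 r1 hr1 j1 p1 q1 a2 r2 hr2 j2 p2 q2}
    (h : dedge (DVert.inner a1 r1 hr1 j1 p1 q1 : DVert R) (.inner a2 r2 hr2 j2 p2 q2)) :
    a1 = a2 ∧ r1 = r2 := by
  obtain ⟨a, r, hr, x, y, hx, hy, _⟩ := h
  exact ⟨hx.1.trans hy.1.symm, hx.2.1.trans hy.2.1.symm⟩

lemma dedge_base_inner {b a2 r2 hr2 j2 p2 q2}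
    (h : dedge (DVert.base b : DVert R) (.inner a2 r2 hr2 j2 p2 q2)) : a2 = b := by
  obtain ⟨a, r, hr, x, y, hx, hy, _⟩ := h
  exact hy.1.trans hx.1.symm

lemma dedge_inner_top {a1 r1 hr1 j1 p1 q1 s hs}
    (h : dedge (DVert.inner a1 r1 hr1 j1 p1 q1 : DVert R) (.top s hs)) : r1 = s := by
  obtain ⟨a, r, hr, x, y, hx, hy, _⟩ := h
  exact hx.2.1.trans hy.1.symm

end DP
namespace DP

variable {A : Type} [DecidableEq A] {k : ℕ} {R : Set (Fin k → A)}

section Phi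

variable (Φ : DVert R → DVert R) (hΦ : ∀ u v, dedge u v → dedge (Φ u) (Φ v))

/-- The walk condition for the canonical walk, in spine form. -/
lemma path_walk {a : A} {r} (hr : r ∈ R) {x} (hx : x < Bd (fF a r) k + 1) :
    ((spine (fF a r) k).getD x false = true →
      dedge (pathVert a r hr x) (pathVert a r hr (x+1))) ∧
    ((spine (fF a r) k).getD x false = false →
      dedge (pathVert a r hr (x+1)) (pathVert a r hr x)) := by
  have hlen : x < (qdirs (idxSet a r)).length := by
    rw [qdirs_idx, spine_length]; exact hx
  constructor
  · intro hT
    exact dedge_pathVert hr (pedge_T hlen (by rw [qdirs_idx]; exact hT))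
  · intro hF
    exact dedge_pathVert hr (pedge_F hlen (by rw [qdirs_idx]; exact hF))

include hΦ in
lemma delta_edge {u v : DVert R} (h : dedge u v) :
    lvl' (Φ u) - lvl' u = lvl' (Φ v) - lvl' v := by
  have h1 := dedge_lvl (hΦ u v h)
  have h2 := dedge_lvl h
  omega

include hΦ in
lemma delta_path {a : A} {r} (hr : r ∈ R) :
    ∀ x, x ≤ plen a r →
      lvl' (Φ (pathVert a r hr x)) - lvl' (pathVert a r hr x) =
      lvl' (Φ (DVert.base a)) - lvl' (DVert.base a : DVert R) := by
  intro x
  induction x with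
  | zero => intro _; rw [pathVert_zero]
  | succ n ih =>
    intro hn
    have hn' : n < Bd (fF a r) k + 1 := by rw [← plen_eq]; omega
    have ihv := ih (by omega)
    cases hd : (spine (fF a r) k).getD n false
    · have hedge := (path_walk hr hn').2 hd
      have := delta_edge Φ hΦ hedge
      omega
    · have hedge := (path_walk hr hn').1 hd
      have := delta_edge Φ hΦ hedge
      omega

include hΦ in
lemma delta_top {a : A} {r} (hr : r ∈ R) :
    lvl' (Φ (DVert.top r hr)) - lvl' (DVert.top r hr : DVert R) =
    lvl' (Φ (DVert.base a)) - lvl' (DVert.base a : DVert R) := by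
  have := delta_path Φ hΦ hr (plen a r) (le_refl _)
  rwa [pathVert_top (le_refl _)] at this

include hΦ in
lemma lvl_pres (a₀ : A) (r₀ : Fin k → A) (hr₀ : r₀ ∈ R) :
    ∀ v, lvl' (Φ v) = lvl' v := by
  have hconst : ∀ v, lvl' (Φ v) - lvl' v =
      lvl' (Φ (DVert.base a₀)) - lvl' (DVert.base a₀ : DVert R) := by
    intro v
    cases v with
    | base a =>
      have h1 := delta_top Φ hΦ (a := a) hr₀
      have h2 := delta_top Φ hΦ (a := a₀) hr₀
      omega
    | top r hr => exact delta_top Φ hΦ hr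
    | inner a r hr j j1 j2 =>
      have h0 := delta_path Φ hΦ hr j (le_of_lt j2)
      rw [pathVert_inner j1 j2] at h0
      have h1 := delta_top Φ hΦ (a := a) hr₀
      have h2 := delta_top Φ hΦ (a := a₀) hr₀
      omega
  have hbase0 : lvl' (DVert.base a₀ : DVert R) = 0 := rfl
  have htop0 : lvl' (DVert.top r₀ hr₀ : DVert R) = (k : ℤ) + 2 := rfl
  have c1 := lvl'_nonneg (Φ (DVert.base a₀))
  have c2 := lvl'_le (Φ (DVert.top r₀ hr₀))
  have c3 := hconst (DVert.top r₀ hr₀)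
  intro v
  have c4 := hconst v
  omega

variable (hlvl : ∀ v : DVert R, lvl' (Φ v) = lvl' v)

include hlvl in
lemma phi_base (a : A) : ∃ b, Φ (.base a) = .base b := by
  apply lvl'_base_eq
  rw [hlvl]
  rfl

include hlvl in
lemma phi_top {r} (hr : r ∈ R) : ∃ s hs, Φ (.top r hr) = .top s hs := by
  apply lvl'_top_eq
  rw [hlvl]
  rfl

include hΦ hlvl in
/-- Main analysis: the image of the canonical walk along `P_(a,r)`. -/
lemma phi_spec (a : A) (r : Fin k → A) (hr : r ∈ R) {b : A}
    (hb : Φ (.base a) = .base b) {s hs} (hts : Φ (.top r hr) = .top s hs) :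
    (∀ l, l < k → fF a r l = true → fF b s l = true) ∧
    (∀ j (j1 : 0 < j) (j2 : j < plen a r),
      Φ (.inner a r hr j j1 j2) =
        pathVert b s hs (gm (fF a r) (fF b s) k j)) := by
  have hLI : plen a r = Bd (fF a r) k + 1 := plen_eq a r
  have hLJ : plen b s = Bd (fF b s) k + 1 := plen_eq b s
  have hkpos := Bd_pos (f := fF a r) (l := k)
  -- the image walk conditions
  have hwc : ∀ x, x < Bd (fF a r) k + 1 →
      ((spine (fF a r) k).getD x false = true →
        dedge (Φ (pathVert a r hr x)) (Φ (pathVert a r hr (x+1)))) ∧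
      ((spine (fF a r) k).getD x false = false →
        dedge (Φ (pathVert a r hr (x+1))) (Φ (pathVert a r hr x))) := by
    intro x hx
    exact ⟨fun hT => hΦ _ _ ((path_walk hr hx).1 hT),
           fun hF => hΦ _ _ ((path_walk hr hx).2 hF)⟩
  -- levels along the image walk
  have hlev : ∀ x, x ≤ Bd (fF a r) k + 1 →
      lvl' (Φ (pathVert a r hr x)) = phgt (spine (fF a r) k) x := by
    intro x hx
    rw [hlvl, ← qdirs_idx]
    exact isAt_lvl (isAt_pathVert (by omega))
  -- interior vertices are inner
  have hi : ∀ x, 0 < x → x < Bd (fF a r) k + 1 →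
      ∃ a' r' hr' j j1 j2, Φ (pathVert a r hr x) = DVert.inner a' r' hr' j j1 j2 := by
    intro x h0 hx
    have hph := phgt_interior (f := fF a r) h0 hx
    apply lvl'_inner_eq
    · rw [hlev x (by omega)]; omega
    · rw [hlev x (by omega)]; omega
  have hw0 : Φ (pathVert a r hr 0) = DVert.base b := by rw [pathVert_zero, hb]
  have h1lt : 1 < Bd (fF a r) k + 1 := by omega
  obtain ⟨a1, r1, hr1, jj, jj1, jj2, hw1⟩ := hi 1 one_pos h1lt
  have ha1 : a1 = b := by
    have hedge := (hwc 0 (by omega)).1 getD_zero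
    rw [hw0, show (0:ℕ)+1 = 1 from rfl, hw1] at hedge
    exact dedge_base_inner hedge
  have ha1' : b = a1 := ha1.symm
  subst ha1'
  -- all interior vertices lie on P_(b, r1)
  have hBS : ∀ x, 0 < x → x < Bd (fF a r) k + 1 →
      ∃ (hr' : r1 ∈ R), ∃ j j1 j2, Φ (pathVert a r hr x) = DVert.inner b r1 hr' j j1 j2 := by
    intro x
    induction x with
    | zero => intro h0; exact absurd h0 (by omega)
    | succ n ih =>
      intro _ hx
      rcases Nat.eq_zero_or_pos n with rfl | hn0
      · exact ⟨hr1, jj, jj1, jj2, hw1⟩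
      · obtain ⟨hr', j, j1, j2, hwn⟩ := ih hn0 (by omega)
        obtain ⟨a2, r2, hr2, j', j1', j2', hwn1⟩ := hi (n+1) (by omega) hx
        have hcc : b = a2 ∧ r1 = r2 := by
          cases hd : (spine (fF a r) k).getD n false
          · have hedge := (hwc n (by omega)).2 hd
            rw [hwn, hwn1] at hedge
            have := dedge_inner_inner hedge
            exact ⟨this.1.symm, this.2.symm⟩
          · have hedge := (hwc n (by omega)).1 hd
            rw [hwn, hwn1] at hedge
            exact dedge_inner_inner hedge
        obtain ⟨e1, e2⟩ := hcc
        subst e1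
        subst e2
        exact ⟨hr2, j', j1', j2', hwn1⟩
  -- the last edge identifies r1 with s
  have hwend : Φ (pathVert a r hr (Bd (fF a r) k + 1)) = DVert.top s hs := by
    rw [pathVert_top (by omega), hts]
  have hr1s : r1 = s := by
    obtain ⟨hr', j, j1, j2, hwn⟩ := hBS (Bd (fF a r) k) hkpos (by omega)
    have hedge := (hwc (Bd (fF a r) k) (by omega)).1 (getD_Bd (le_refl k))
    rw [show Bd (fF a r) k + 1 = Bd (fF a r) k + 1 from rfl, hwn, hwend] at hedge
    exact dedge_inner_top hedge
  have hr1s' : s = r1 := hr1s.symm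
  subst hr1s'
  -- define the position map
  have hpos : ∀ x, x ≤ Bd (fF a r) k + 1 → ∃ pos, isAt (Φ (pathVert a r hr x)) b s pos := by
    intro x hx
    rcases Nat.eq_zero_or_pos x with rfl | h0
    · exact ⟨0, by rw [hw0]; exact ⟨rfl, rfl⟩⟩
    · rcases Nat.lt_or_ge x (Bd (fF a r) k + 1) with hlt | hge
      · obtain ⟨hr', j, j1, j2, hwn⟩ := hBS x h0 hlt
        exact ⟨j, by rw [hwn]; exact ⟨rfl, rfl, rfl⟩⟩
      · have hxe : x = Bd (fF a r) k + 1 := by omega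
        subst hxe
        exact ⟨plen b s, by rw [hwend]; exact ⟨rfl, rfl⟩⟩
  classical
  set p : ℕ → ℕ :=
    fun x => if h : x ≤ Bd (fF a r) k + 1 then (hpos x h).choose else 0 with hpdef
  have hpat : ∀ x, x ≤ Bd (fF a r) k + 1 → isAt (Φ (pathVert a r hr x)) b s (p x) := by
    intro x hx
    rw [hpdef]
    simp only [dif_pos hx]
    exact (hpos x hx).choose_spec
  have hp0 : p 0 = 0 := by
    have h := hpat 0 (by omega)
    rw [hw0] at h
    exact h.2
  have hpend : p (Bd (fF a r) k + 1) = Bd (fF b s) k + 1 := by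
    have h := hpat (Bd (fF a r) k + 1) (le_refl _)
    rw [hwend] at h
    rw [h.2, hLJ]
  -- components of edge witnesses
  have hcomp : ∀ x, 0 < x → x < Bd (fF a r) k + 1 → ∀ {aW rW xW},
      isAt (Φ (pathVert a r hr x)) aW rW xW → aW = b ∧ rW = s ∧ xW = p x := by
    intro x h0 hx aW rW xW hAt
    obtain ⟨hr', j, j1, j2, hwn⟩ := hBS x h0 hx
    rw [hwn] at hAt
    have hAt2 := hpat x (by omega)
    rw [hwn] at hAt2
    exact ⟨hAt.1.symm, hAt.2.1.symm, by rw [hAt.2.2, ← hAt2.2.2]⟩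
  -- validity of the position map
  have hvalid : PValid (fF a r) (fF b s) k p := by
    intro x hx
    have hx1 : x + 1 ≤ Bd (fF a r) k + 1 := by omega
    constructor
    · intro hT
      obtain ⟨aW, rW, hrW, xW, yW, hxW, hyW, hpeW⟩ := (hwc x hx).1 hT
      have hyWc : aW = b ∧ rW = s ∧ yW = p (x+1) := by
        rcases Nat.lt_or_ge (x+1) (Bd (fF a r) k + 1) with hlt | hge
        · exact hcomp (x+1) (by omega) hlt hyW
        · have hxe : x + 1 = Bd (fF a r) k + 1 := by omega
          rw [hxe, hwend] at hyW
          have hx0 : 0 < x := by omega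
          obtain ⟨hcA, hcR, hcX⟩ := hcomp x hx0 hx hxW
          refine ⟨hcA, hyW.1.symm, ?_⟩
          rw [hxe, hpend, hyW.2, plen_eq, hcA, hcR]
      obtain ⟨heA, heR, heY⟩ := hyWc
      subst heA; subst heR
      have heX : xW = p x := by
        rcases Nat.eq_zero_or_pos x with rfl | h0
        · rw [hw0] at hxW
          rw [hxW.2, hp0]
        · exact (hcomp x h0 hx hxW).2.2
      rw [← heX, ← heY, ← qdirs_idx]
      exact hpeW
    · intro hF
      obtain ⟨aW, rW, hrW, xW, yW, hxW, hyW, hpeW⟩ := (hwc x hx).2 hF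
      -- here the edge goes from position x+1 to position x; x+1 is interior
      have hxF : x ≠ 0 ∧ x + 1 ≠ Bd (fF a r) k + 1 := by
        constructor
        · intro he
          subst he
          rw [getD_zero] at hF
          cases hF
        · intro he
          have : (spine (fF a r) k).getD (Bd (fF a r) k) false = true := getD_Bd (le_refl k)
          have hxB : x = Bd (fF a r) k := by omega
          rw [hxB, this] at hF
          cases hF
      obtain ⟨hcA, hcR, hcX⟩ := hcomp (x+1) (by omega) (by omega) hxW
      subst hcA; subst hcR
      have heY : yW = p x := (hcomp x (Nat.pos_of_ne_zero hxF.1) hx hyW).2.2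
      rw [← hcX, ← heY, ← qdirs_idx]
      exact hpeW
  -- conclusion 1 : the index set grows
  have hfg : ∀ l, l < k → fF a r l = true → fF b s l = true :=
    walk_subset p hp0 hpend hvalid
  refine ⟨hfg, ?_⟩
  -- conclusion 2 : inner vertices are mapped canonically
  intro j j1 j2
  have j2' : j < Bd (fF a r) k + 1 := by omega
  have hgmj : p j = gm (fF a r) (fF b s) k j := walk_unique hfg p hp0 hvalid j (by omega)
  have hint := GoodSt_interior (gm_good hfg j (by omega)) j1 j2'
  obtain ⟨hr', j', hj1, hj2, hwn⟩ := hBS j j1 j2'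
  have hAt := hpat j (by omega)
  rw [hwn] at hAt
  have hjj : j' = gm (fF a r) (fF b s) k j := by rw [← hAt.2.2, hgmj]
  subst hjj
  rw [← pathVert_inner j1 j2, hwn,
    pathVert_inner (show 0 < gm (fF a r) (fF b s) k j by omega)
      (show gm (fF a r) (fF b s) k j < plen b s by omega)]

end Phi

end DP
namespace DP

variable {A : Type} [DecidableEq A] {k : ℕ} {R : Set (Fin k → A)}

lemma fF_mono (φ : A → A) (a : A) (r : Fin k → A) :
    ∀ l, l < k → fF a r l = true → fF (φ a) (fun i => φ (r i)) l = true := by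
  intro l hl h
  have h1 : a = r ⟨l, hl⟩ := fF_iff.mp h
  exact (fF_iff (a := φ a) (r := fun i => φ (r i)) (i := ⟨l, hl⟩)).mpr (congrArg φ h1)

/-- The canonical endomorphism of `D(A)` induced by `φ`. -/
def Gmap (φ : A → A) (hpres : ∀ r ∈ R, (fun i => φ (r i)) ∈ R) : DVert R → DVert R
  | .base a => .base (φ a)
  | .top r hr => .top (fun i => φ (r i)) (hpres r hr)
  | .inner a r hr j _ _ =>
      pathVert (φ a) (fun i => φ (r i)) (hpres r hr)
        (gm (fF a r) (fF (φ a) (fun i => φ (r i))) k j)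

lemma Gmap_isAt (φ : A → A) (hpres : ∀ r ∈ R, (fun i => φ (r i)) ∈ R)
    {u : DVert R} {a r x} (hr : r ∈ R) (hu : isAt u a r x) :
    Gmap φ hpres u = pathVert (φ a) (fun i => φ (r i)) (hpres r hr)
      (gm (fF a r) (fF (φ a) (fun i => φ (r i))) k x) := by
  have hfg := fF_mono (k := k) φ a r
  cases u with
  | base c =>
    obtain ⟨rfl, rfl⟩ := hu
    rw [show gm (fF c r) (fF (φ c) (fun i => φ (r i))) k 0 = 0 from rfl, pathVert_zero]
    rfl
  | top r' hr' =>
    obtain ⟨rfl, rfl⟩ := hu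
    rw [plen_eq, gm_end hfg, pathVert_top (by rw [plen_eq])]
    rfl
  | inner a' r'' hr'' j j1 j2 =>
    obtain ⟨rfl, rfl, rfl⟩ := hu
    rfl

lemma Gmap_hom (φ : A → A) (hpres : ∀ r ∈ R, (fun i => φ (r i)) ∈ R) :
    ∀ u v, dedge u v → dedge (Gmap φ hpres u) (Gmap φ hpres v) := by
  intro u v hd
  obtain ⟨a, r, hr, x, y, hx, hy, hpe⟩ := hd
  rw [Gmap_isAt φ hpres hr hx, Gmap_isAt φ hpres hr hy]
  have hfg := fF_mono (k := k) φ a r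
  rcases hpe with ⟨rfl, hlen, hT⟩ | ⟨rfl, hlen, hF⟩
  · have hx' : x < Bd (fF a r) k + 1 := by
      rw [qdirs_idx, spine_length] at hlen; exact hlen
    have hped := (gm_valid hfg x hx').1 (by rw [qdirs_idx] at hT; exact hT)
    apply dedge_pathVert (hpres r hr)
    rw [qdirs_idx]
    exact hped
  · have hy' : y < Bd (fF a r) k + 1 := by
      rw [qdirs_idx, spine_length] at hlen; exact hlen
    have hped := (gm_valid hfg y hy').2 (by rw [qdirs_idx] at hF; exact hF)
    apply dedge_pathVert (hpres r hr)
    rw [qdirs_idx]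
    exact hped

/-- Full analysis of an arbitrary endomorphism. -/
lemma analyze (a₀ : A) (r₀ : Fin k → A) (hr₀ : r₀ ∈ R)
    (Φ : DVert R → DVert R) (hΦ : ∀ u v, dedge u v → dedge (Φ u) (Φ v)) :
    ∃ (φ : A → A) (hpres : ∀ r ∈ R, (fun i => φ (r i)) ∈ R),
      (∀ a, Φ (.base a) = .base (φ a)) ∧
      (∀ r (hr : r ∈ R), Φ (.top r hr) = .top (fun i => φ (r i)) (hpres r hr)) ∧
      (∀ v, Φ v = Gmap φ hpres v) := by
  classical
  have hlvl := lvl_pres Φ hΦ a₀ r₀ hr₀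
  set φ : A → A := fun a => (phi_base Φ hlvl a).choose with hφdef
  have hφ : ∀ a, Φ (.base a) = .base (φ a) := fun a => (phi_base Φ hlvl a).choose_spec
  have htopAll : ∀ r (hr : r ∈ R), ∃ hs' : (fun i => φ (r i)) ∈ R,
      Φ (.top r hr) = .top (fun i => φ (r i)) hs' := by
    intro r hr
    obtain ⟨s, hs, hts⟩ := phi_top Φ hlvl hr
    have hseq : s = fun i => φ (r i) := by
      funext i
      have h1 : fF (r i) r i.val = true := fF_iff.mpr rfl
      have h2 := (phi_spec Φ hΦ hlvl (r i) r hr (hφ (r i)) hts).1 i.val i.isLt h1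
      exact (fF_iff.mp h2).symm
    subst hseq
    exact ⟨hs, hts⟩
  refine ⟨φ, fun r hr => (htopAll r hr).choose, hφ,
    fun r hr => (htopAll r hr).choose_spec, ?_⟩
  intro v
  cases v with
  | base a => exact hφ a
  | top r hr => exact (htopAll r hr).choose_spec
  | inner a r hr j j1 j2 =>
    exact (phi_spec Φ hΦ hlvl a r hr (hφ a) ((htopAll r hr).choose_spec)).2 j j1 j2

end DP

/-- Every endomorphism `Φ` of `D(A)` restricts on `A ∪ R` to a pair `(φ, φ^(k))`
with `φ` an endomorphism of `(A; R)`; hence the endomorphisms of `A` and of `D(A)`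
are in one-to-one correspondence. -/
theorem endomorphisms_of_D_correspond {A : Type} [DecidableEq A] [Fintype A] {k : ℕ}
    (R : Set (Fin k → A)) (hR : R.Nonempty) :
    (∀ Φ : DVert R → DVert R, (∀ u v, dedge u v → dedge (Φ u) (Φ v)) →
      ∃ φ : A → A, (∀ r ∈ R, (fun i => φ (r i)) ∈ R) ∧
        (∀ a, Φ (DVert.base a) = DVert.base (φ a)) ∧
        (∀ r (hr : r ∈ R), ∃ hr' : (fun i => φ (r i)) ∈ R,
          Φ (DVert.top r hr) = DVert.top (fun i => φ (r i)) hr')) ∧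
    (∃ G : {φ : A → A // ∀ r ∈ R, (fun i => φ (r i)) ∈ R} →
           {Φ : DVert R → DVert R // ∀ u v, dedge u v → dedge (Φ u) (Φ v)},
      Function.Bijective G ∧
      ∀ φ a, (G φ).1 (DVert.base a) = DVert.base (φ.1 a)) := by
  classical
  obtain ⟨r₀, hr₀⟩ := hR
  by_cases hA : Nonempty A
  · obtain ⟨a₀⟩ := hA
    constructor
    · intro Φ hΦ
      obtain ⟨φ, hpres, hbase, htop, _⟩ := DP.analyze a₀ r₀ hr₀ Φ hΦ
      exact ⟨φ, hpres, hbase, fun r hr => ⟨hpres r hr, htop r hr⟩⟩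
    · refine ⟨fun φ => ⟨DP.Gmap φ.1 φ.2, DP.Gmap_hom φ.1 φ.2⟩, ⟨?_, ?_⟩, fun φ a => rfl⟩
      · intro φ1 φ2 h
        apply Subtype.ext
        funext a
        have h1 := congrFun (congrArg Subtype.val h) (DVert.base a)
        have h3 : DVert.base (φ1.1 a) = (DVert.base (φ2.1 a) : DVert R) := h1
        injection h3
      · intro Φp
        obtain ⟨Φ, hΦ⟩ := Φp
        obtain ⟨φ, hpres, hbase, htop, hall⟩ := DP.analyze a₀ r₀ hr₀ Φ hΦ
        refine ⟨⟨φ, hpres⟩, ?_⟩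
        apply Subtype.ext
        funext v
        exact (hall v).symm
  · have hk : k = 0 := by
      by_contra hk
      exact hA ⟨r₀ ⟨0, Nat.pos_of_ne_zero hk⟩⟩
    subst hk
    have hfun : ∀ r r' : Fin 0 → A, r = r' := fun r r' => funext (fun i => i.elim0)
    constructor
    · intro Φ hΦ
      refine ⟨fun a => a, ?_, ?_, ?_⟩
      · intro r hrr
        exact hrr
      · intro a
        exact absurd ⟨a⟩ hA
      · intro r hrr
        cases h : Φ (.top r hrr) with
        | base a => exact absurd ⟨a⟩ hA
        | inner a r' hr' j j1 j2 => exact absurd ⟨a⟩ hA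
        | top s hs =>
          have he : s = fun i => (fun a : A => a) (r i) := hfun _ _
          subst he
          exact ⟨hs, rfl⟩
    · refine ⟨fun φ => ⟨fun v => v, fun u v h => h⟩, ⟨?_, ?_⟩, ?_⟩
      · intro φ1 φ2 _
        apply Subtype.ext
        funext a
        exact absurd ⟨a⟩ hA
      · intro Φp
        obtain ⟨Φ, hΦ⟩ := Φp
        refine ⟨⟨fun a => a, fun r hrr => hrr⟩, ?_⟩
        apply Subtype.ext
        funext v
        cases v with
        | base a => exact absurd ⟨a⟩ hA
        | inner a r' hr' j j1 j2 => exact absurd ⟨a⟩ hA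
        | top s hs =>
          show DVert.top s hs = Φ (.top s hs)
          cases h : Φ (.top s hs) with
          | base a => exact absurd ⟨a⟩ hA
          | inner a r' hr' j j1 j2 => exact absurd ⟨a⟩ hA
          | top s' hs' =>
            have he : s' = s := hfun _ _
            subst he
            rfl
      · intro φ a
        exact absurd ⟨a⟩ hA
end

section
/- For every m > 0, the m-th power digraph D(A)^m contains both A^m and R^m inside the connected component Δ_m of the diagonal {(c,...,c) : c ∈ D(A)}. -/
/-- Connectivity (by oriented paths, i.e. ignoring edge directions) in the power
digraph `D(A)^m`. -/
def connM {A : Type} [DecidableEq A] {k : ℕ} {R : Set (Fin k → A)} {m : ℕ}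
    (u v : Fin m → DVert R) : Prop :=
  Relation.ReflTransGen
    (fun x y : Fin m → DVert R =>
      (∀ i, dedge (x i) (y i)) ∨ (∀ i, dedge (y i) (x i))) u v

/-! Each base vertex `a` is joined to each top vertex `r` by the connecting path
`Q_{idxSet a r}`, and `Q_∅` maps onto every `Q_I` fixing the endpoints. So in every
coordinate one walks from `a` to `r` along the same pattern `Q_∅`; this is an oriented path
in `D(A)^m` from any tuple of base vertices to any tuple of top vertices, and in particular
to or from a constant tuple. -/

section DigraphWalks

variable {A : Type} [DecidableEq A] {k : ℕ} {R : Set (Fin k → A)}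

lemma walkAlong_append {ds₁ ds₂ : List Bool} {u v w : DVert R}
    (h₁ : walkAlong ds₁ u v) (h₂ : walkAlong ds₂ v w) :
    walkAlong (ds₁ ++ ds₂) u w := by
  obtain ⟨φ₁, hφ₁0, hφ₁n, hφ₁⟩ := h₁
  obtain ⟨φ₂, hφ₂0, hφ₂n, hφ₂⟩ := h₂
  set n := ds₁.length
  let ψ : ℕ → DVert R := fun x => if x ≤ n then φ₁ x else φ₂ (x - n)
  have hψ₂ : ∀ x, n ≤ x → ψ x = φ₂ (x - n) := by
    intro x hx
    rcases hx.eq_or_lt with rfl | hx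
    · simp [ψ, hφ₁n, hφ₂0]
    · simp [ψ, Nat.not_le.mpr hx]
  refine ⟨ψ, by simp [ψ, hφ₁0], ?_, fun x hx => ?_⟩
  · rw [hψ₂ _ (by simp [n]), List.length_append, Nat.add_sub_cancel_left, hφ₂n]
  rw [List.length_append] at hx
  rcases lt_or_ge x n with hxn | hxn
  · simp only [ψ, hxn.le, Nat.succ_le_of_lt hxn, if_true, List.getD_append _ _ _ _ hxn]
    exact hφ₁ x hxn
  · rw [hψ₂ x hxn, hψ₂ (x + 1) (by omega), List.getD_append_right _ _ _ _ hxn,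
      Nat.sub_add_comm hxn]
    exact hφ₂ (x - n) (by omega)

lemma exists_walkAlong_of_walkAlong_append {ds₁ ds₂ : List Bool} {u w : DVert R}
    (h : walkAlong (ds₁ ++ ds₂) u w) :
    ∃ v, walkAlong ds₁ u v ∧ walkAlong ds₂ v w := by
  obtain ⟨φ, hφ0, hφn, hφ⟩ := h
  refine ⟨φ ds₁.length, ⟨φ, hφ0, rfl, fun x hx => ?_⟩,
    ⟨fun x => φ (ds₁.length + x), by simp, by simpa using hφn, fun x hx => ?_⟩⟩
  · rw [← List.getD_append _ ds₂ _ _ hx]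
    exact hφ x (by rw [List.length_append]; omega)
  · have := hφ (ds₁.length + x) (by rw [List.length_append]; omega)
    rw [List.getD_append_right _ _ _ _ (by omega), Nat.add_sub_cancel_left] at this
    simpa [Nat.add_assoc] using this

lemma walkAlong_zigzag_of_walkAlong_singleton {u v : DVert R} (h : walkAlong [true] u v) :
    walkAlong [true, false, true] u v := by
  obtain ⟨φ, rfl, rfl, hφ⟩ := h
  have huv : dedge (φ 0) (φ 1) := (hφ 0 (by simp)).1 rfl
  refine ⟨fun x => if x % 2 = 0 then φ 0 else φ 1, by simp, by simp, fun x hx => ?_⟩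
  simp only [List.length_cons, List.length_nil] at hx
  interval_cases x <;> simp [huv]

lemma walkAlong_flatMap_of_forall {α : Type*} {f g : α → List Bool}
    (hfg : ∀ l (u v : DVert R), walkAlong (f l) u v → walkAlong (g l) u v) :
    ∀ (L : List α) {u v : DVert R}, walkAlong (L.flatMap f) u v → walkAlong (L.flatMap g) u v
  | [], _, _, h => h
  | l :: L, _, _, h => by
    rw [List.flatMap_cons] at h ⊢
    obtain ⟨v, hl, hL⟩ := exists_walkAlong_of_walkAlong_append h
    exact walkAlong_append (hfg l _ _ hl) (walkAlong_flatMap_of_forall hfg L hL)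

/-- The homomorphism `Q_∅ → Q_I`: each single edge of `Q_I` is covered by a zigzag. -/
lemma walkAlong_qdirs_empty {I : Finset (Fin k)} {u v : DVert R}
    (h : walkAlong (qdirs I) u v) : walkAlong (qdirs (∅ : Finset (Fin k))) u v := by
  obtain ⟨w, hw, hlast⟩ := exists_walkAlong_of_walkAlong_append h
  obtain ⟨u', hfirst, hmid⟩ := exists_walkAlong_of_walkAlong_append hw
  refine walkAlong_append (walkAlong_append hfirst
    (walkAlong_flatMap_of_forall (fun l u v hl => ?_) _ hmid)) hlast
  by_cases hlI : l ∈ I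
  · simpa using walkAlong_zigzag_of_walkAlong_singleton (by simpa [hlI] using hl)
  · simpa [hlI] using hl

lemma plen_pos (a : A) (r : Fin k → A) : 0 < plen a r := by
  simp [plen, qdirs]

def pathVertex (a : A) (r : Fin k → A) (hr : r ∈ R) (j : ℕ) : DVert R :=
  if h0 : j = 0 then .base a
  else if hj : j < plen a r then .inner a r hr j (Nat.pos_of_ne_zero h0) hj
  else .top r hr

lemma isAt_pathVertex (a : A) {r : Fin k → A} (hr : r ∈ R) {j : ℕ} (hj : j ≤ plen a r) :
    isAt (pathVertex a r hr j) a r j := by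
  unfold pathVertex
  split_ifs with h0 hlt
  · simp [isAt, h0]
  · simp [isAt]
  · simp [isAt, le_antisymm hj (not_lt.mp hlt)]

lemma dedge_pathVertex (a : A) {r : Fin k → A} (hr : r ∈ R) {x y : ℕ}
    (h : pedge (qdirs (idxSet a r)) x y) :
    dedge (pathVertex a r hr x) (pathVertex a r hr y) := by
  obtain ⟨hx, hy⟩ : x ≤ plen a r ∧ y ≤ plen a r := by
    rcases h with ⟨_, _, _⟩ | ⟨_, _, _⟩ <;> unfold plen <;> omega
  exact ⟨a, r, hr, x, y, isAt_pathVertex a hr hx, isAt_pathVertex a hr hy, h⟩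

lemma walkAlong_qdirs_base_top (a : A) {r : Fin k → A} (hr : r ∈ R) :
    walkAlong (qdirs (idxSet a r)) (.base a) (.top r hr) := by
  refine ⟨pathVertex a r hr, by simp [pathVertex], ?_, fun x hx => ⟨fun ht => ?_, fun hf => ?_⟩⟩
  · show pathVertex a r hr (plen a r) = _
    rw [pathVertex, dif_neg (plen_pos a r).ne', dif_neg (lt_irrefl _)]
  · exact dedge_pathVertex a hr (Or.inl ⟨rfl, hx, ht⟩)
  · exact dedge_pathVertex a hr (Or.inr ⟨rfl, hx, hf⟩)

variable {m : ℕ}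

lemma connM_of_forall_walkAlong {ds : List Bool} {u v : Fin m → DVert R}
    (h : ∀ i, walkAlong ds (u i) (v i)) : connM u v := by
  choose φ hφ0 hφn hφ using h
  have reach : ∀ n ≤ ds.length, connM u (fun i => φ i n) := by
    intro n
    induction n with
    | zero =>
      intro _
      rw [show (fun i => φ i 0) = u from funext hφ0]
      exact .refl
    | succ n ih =>
      intro hn
      refine (ih (by omega)).tail ?_
      cases hb : ds.getD n false with
      | true => exact Or.inl fun i => (hφ i n hn).1 hb
      | false => exact Or.inr fun i => (hφ i n hn).2 hb
  have := reach ds.length le_rfl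
  rwa [show (fun i => φ i ds.length) = v from funext hφn] at this

lemma connM_symm {u v : Fin m → DVert R} (h : connM u v) : connM v u := by
  induction h with
  | refl => exact .refl
  | tail _ hstep ih => exact ih.head hstep.symm

end DigraphWalks

theorem Am_Rm_in_diagonal_component_general {A : Type} [DecidableEq A] {k : ℕ}
    (R : Set (Fin k → A)) (hR : R.Nonempty) (m : ℕ) :
    (∀ t : Fin m → A, ∃ c : DVert R,
      connM (fun i => DVert.base (t i)) (fun _ => c)) ∧
    (∀ (rs : Fin m → (Fin k → A)) (h : ∀ i, rs i ∈ R), ∃ c : DVert R,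
      connM (fun i => DVert.top (rs i) (h i)) (fun _ => c)) := by
  obtain ⟨r₀, hr₀⟩ := hR
  have walk (a : A) {r : Fin k → A} (hr : r ∈ R) :
      walkAlong (qdirs (∅ : Finset (Fin k))) (.base a) (.top r hr) :=
    walkAlong_qdirs_empty (walkAlong_qdirs_base_top a hr)
  refine ⟨fun t => ⟨.top r₀ hr₀, connM_of_forall_walkAlong fun i => walk (t i) hr₀⟩,
    fun rs h => ?_⟩
  rcases isEmpty_or_nonempty A with hA | hA
  · -- `r₀` forces `k = 0`, so `R` has at most one element.
    have : IsEmpty (Fin k) := ⟨fun i => isEmptyElim (r₀ i)⟩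
    obtain rfl : rs = fun _ => r₀ := Subsingleton.elim _ _
    exact ⟨.top r₀ hr₀, .refl⟩
  · obtain ⟨a⟩ := hA
    exact ⟨.base a, connM_symm (connM_of_forall_walkAlong fun i => walk a (h i))⟩

/-- For every `m > 0`, both `A^m` and `R^m` lie in the connected component `Δ_m` of
the diagonal in the power digraph `D(A)^m`. -/
theorem Am_Rm_in_diagonal_component {A : Type} [DecidableEq A] {k : ℕ}
    (R : Set (Fin k → A)) (hR : R.Nonempty) (m : ℕ) (hm : 0 < m) :
    (∀ t : Fin m → A, ∃ c : DVert R,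
      connM (fun i => DVert.base (t i)) (fun _ => c)) ∧
    (∀ (rs : Fin m → (Fin k → A)) (h : ∀ i, rs i ∈ R), ∃ c : DVert R,
      connM (fun i => DVert.top (rs i) (h i)) (fun _ => c)) :=
  Am_Rm_in_diagonal_component_general R hR m
end
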